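/- arXiv:2510.18919 — 8 statements merged into one kernel-verified Lean document; each statement's English description precedes it below -/
import Mathlib

section
/- Let S and S' be finite subsets of the positive reals such that whenever s, t ∈ S ∩ S' and s + t ∈ S, then s + t ∈ S ∩ S'. Let Γ_S = {r > 0 : r = s1 + s2 − s3 for some S-triangle (s1,s2,s3)}, and let γ = min Γ_S > 0. Let t_1 < t_2 < ... < t_m enumerate S \ S'. Suppose 0 < ε < γ/2 and Φ : S → S' is a bijection fixing S ∩ S' pointwise and satisfying ε/2^{i+1} < Φ(t_i) − t_i < ε/2^i for each 1 ≤ i ≤ m. Then for every S-triangle (s1,s2,s3), the triple (Φ(s1), Φ(s2), Φ(s3)) is an S'-triangle. -/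
/-- the main technical lemma on transferring `S`-triangles to `S'`-triangles
via a bijection `Φ`. -/
theorem stmt_1 (S S' : Finset ℝ)
    (hpos : ∀ s ∈ S, (0:ℝ) < s) (hpos' : ∀ s ∈ S', (0:ℝ) < s)
    (hclosed : ∀ s ∈ S ∩ S', ∀ t ∈ S ∩ S', s + t ∈ S → s + t ∈ S ∩ S')
    (γ : ℝ)
    (hγ : IsLeast {r : ℝ | 0 < r ∧ ∃ s1 ∈ S, ∃ s2 ∈ S, ∃ s3 ∈ S,
        (|s1 - s2| ≤ s3 ∧ s3 ≤ s1 + s2) ∧ r = s1 + s2 - s3} γ)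
    (hγpos : 0 < γ)
    (m : ℕ) (t : Fin m → ℝ) (ht : StrictMono t)
    (htmem : ∀ i, t i ∈ S ∧ t i ∉ S')
    (htcover : ∀ x, x ∈ S → x ∉ S' → ∃ i, t i = x)
    (ε : ℝ) (hε : 0 < ε) (hεγ : ε < γ / 2)
    (Φ : ℝ → ℝ) (hbij : Set.BijOn Φ (S : Set ℝ) (S' : Set ℝ))
    (hfix : ∀ s ∈ S ∩ S', Φ s = s)
    (hbound : ∀ i : Fin m,
        ε / 2 ^ ((i : ℕ) + 2) < Φ (t i) - t i ∧ Φ (t i) - t i < ε / 2 ^ ((i : ℕ) + 1)) :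
    ∀ s1 ∈ S, ∀ s2 ∈ S, ∀ s3 ∈ S, (|s1 - s2| ≤ s3 ∧ s3 ≤ s1 + s2) →
      (|Φ s1 - Φ s2| ≤ Φ s3 ∧ Φ s3 ≤ Φ s1 + Φ s2) := by
  -- every element of S\S' is some t i with dyadic bounds
  have hnotb : ∀ s ∈ S, s ∉ S' → ∃ i : Fin m, t i = s ∧
      ε / 2 ^ ((i : ℕ) + 2) < Φ s - s ∧ Φ s - s < ε / 2 ^ ((i : ℕ) + 1) := by
    intro s hs hs'
    obtain ⟨i, hi⟩ := htcover s hs hs'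
    exact ⟨i, hi, by rw [← hi]; exact (hbound i).1, by rw [← hi]; exact (hbound i).2⟩
  have hlb : ∀ s ∈ S, 0 ≤ Φ s - s := by
    intro s hs
    by_cases hs' : s ∈ S'
    · rw [hfix s (Finset.mem_inter.2 ⟨hs, hs'⟩)]; simp
    · obtain ⟨i, _, h1, _⟩ := hnotb s hs hs'
      have : 0 < ε / 2 ^ ((i : ℕ) + 2) := by positivity
      linarith
  have hub : ∀ s ∈ S, Φ s - s < ε / 2 := by
    intro s hs
    by_cases hs' : s ∈ S'
    · rw [hfix s (Finset.mem_inter.2 ⟨hs, hs'⟩)]; simp; positivity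
    · obtain ⟨i, _, _, h2⟩ := hnotb s hs hs'
      have : ε / 2 ^ ((i : ℕ) + 1) ≤ ε / 2 := by
        have h21 : (2:ℝ) ^ 1 ≤ 2 ^ ((i : ℕ) + 1) :=
          pow_le_pow_right₀ one_le_two (by omega)
        rw [pow_one] at h21
        exact div_le_div_of_nonneg_left hε.le (by norm_num) h21
      linarith
  -- the key subadditivity lemma for δ(s) = Φ s - s
  have hkey : ∀ a ∈ S, ∀ b ∈ S, a + b ∈ S →
      Φ (a + b) - (a + b) ≤ (Φ a - a) + (Φ b - b) := by
    intro a ha b hb hab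
    by_cases hc : a + b ∈ S'
    · rw [hfix _ (Finset.mem_inter.2 ⟨hab, hc⟩)]
      have := hlb a ha; have := hlb b hb; linarith
    · obtain ⟨k, hk, hk1, hk2⟩ := hnotb _ hab hc
      -- one of a, b is not in S'
      have main : ∀ x ∈ S, x ∉ S' → x < a + b → ∀ y ∈ S,
          Φ (a + b) - (a + b) ≤ (Φ x - x) + (Φ y - y) := by
        intro x hx hx' hxlt y hy
        obtain ⟨i, hi, hi1, _⟩ := hnotb x hx hx'
        have hik : i < k := by
          have : t i < t k := by rw [hi, hk]; exact hxlt
          exact ht.lt_iff_lt.mp this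
        have hik' : (i : ℕ) < (k : ℕ) := hik
        have h2 : ε / 2 ^ ((k : ℕ) + 1) ≤ ε / 2 ^ ((i : ℕ) + 2) :=
          div_le_div_of_nonneg_left hε.le (by positivity)
            (pow_le_pow_right₀ one_le_two (by omega))
        have := hlb y hy
        linarith
      by_cases ha' : a ∈ S'
      · have hb' : b ∉ S' := by
          intro hb'
          exact hc (Finset.mem_inter.1 (hclosed a (Finset.mem_inter.2 ⟨ha, ha'⟩)
            b (Finset.mem_inter.2 ⟨hb, hb'⟩) hab)).2
        have hblt : b < a + b := by have := hpos a ha; linarith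
        have := main b hb hb' hblt a ha
        linarith
      · have halt : a < a + b := by have := hpos b hb; linarith
        exact main a ha ha' halt b hb
  -- γ bound
  have hγle : ∀ a ∈ S, ∀ b ∈ S, ∀ c ∈ S, |a - b| ≤ c → c < a + b → γ ≤ a + b - c := by
    intro a ha b hb c hc habs hlt
    exact hγ.2 ⟨by linarith, a, ha, b, hb, c, hc, ⟨habs, hlt.le⟩, rfl⟩
  intro s1 hs1 s2 hs2 s3 hs3 ⟨h1, h2⟩
  have h1' := abs_sub_le_iff.1 h1
  have hu1 := hub s1 hs1; have hu2 := hub s2 hs2; have hu3 := hub s3 hs3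
  have hl1 := hlb s1 hs1; have hl2 := hlb s2 hs2; have hl3 := hlb s3 hs3
  constructor
  · rw [abs_sub_le_iff]
    constructor
    · -- Φ s1 ≤ Φ s3 + Φ s2, i.e. Φ s1 - Φ s2 ≤ Φ s3
      rcases eq_or_lt_of_le (show s1 ≤ s2 + s3 by linarith [h1'.1]) with heq | hlt
      · have := hkey s2 hs2 s3 hs3 (by rw [← heq]; exact hs1)
        rw [← heq] at this
        linarith
      · have habs : |s2 - s3| ≤ s1 := by
          rw [abs_sub_le_iff]; constructor <;> linarith [h1'.2]
        have := hγle s2 hs2 s3 hs3 s1 hs1 habs (by linarith)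
        linarith
    · rcases eq_or_lt_of_le (show s2 ≤ s1 + s3 by linarith [h1'.2]) with heq | hlt
      · have := hkey s1 hs1 s3 hs3 (by rw [← heq]; exact hs2)
        rw [← heq] at this
        linarith
      · have habs : |s1 - s3| ≤ s2 := by
          rw [abs_sub_le_iff]; constructor <;> linarith [h1'.1]
        have := hγle s1 hs1 s3 hs3 s2 hs2 habs (by linarith)
        linarith
  · rcases eq_or_lt_of_le h2 with heq | hlt
    · have := hkey s1 hs1 s2 hs2 (by rw [← heq]; exact hs3)
      rw [← heq] at this
      linarith
    · have := hγle s1 hs1 s2 hs2 s3 hs3 h1 hlt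
      linarith
end

section
/- Let Δ be a distance value set (a nonempty set of positive reals such that for all x, y ∈ Δ, min{x+y, sup Δ} ∈ Δ) with inf Δ = 0. Then Δ is dense in the interval (0, sup Δ). -/
/-- a distance value set `Δ` with `inf Δ = 0` is dense in `(0, sup Δ)`
(in `(0, ∞)` when `Δ` is unbounded). -/
theorem stmt_2 (Δ : Set ℝ) (hne : Δ.Nonempty) (hpos : ∀ x ∈ Δ, 0 < x)
    (hclosed : ∀ x ∈ Δ, ∀ y ∈ Δ,
      (BddAbove Δ → min (x + y) (sSup Δ) ∈ Δ) ∧ (¬ BddAbove Δ → x + y ∈ Δ))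
    (hinf : sInf Δ = 0) :
    ∀ r : ℝ, 0 < r → (BddAbove Δ → r < sSup Δ) →
      ∀ η : ℝ, 0 < η → ∃ z ∈ Δ, |z - r| < η := by
  intro r hr hrs η hη
  -- choose a small δ
  have hδ : ∃ δ : ℝ, 0 < δ ∧ δ ≤ η ∧ (BddAbove Δ → r + δ < sSup Δ) := by
    by_cases hb : BddAbove Δ
    · refine ⟨min η ((sSup Δ - r)/2), ?_, min_le_left _ _, ?_⟩
      · have := hrs hb
        exact lt_min hη (by linarith)
      · intro _
        have h1 : min η ((sSup Δ - r)/2) ≤ (sSup Δ - r)/2 := min_le_right _ _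
        have := hrs hb
        linarith
    · exact ⟨η, hη, le_refl _, fun h => absurd h hb⟩
  obtain ⟨δ, hδpos, hδη, hδs⟩ := hδ
  have hinflt : sInf Δ < δ := by rw [hinf]; exact hδpos
  obtain ⟨ε, hεΔ, hεδ⟩ := exists_lt_of_csInf_lt hne hinflt
  have hεpos := hpos ε hεΔ
  -- the step lemma
  have hstep : ∀ x ∈ Δ, x + ε ≤ r + δ → x + ε ∈ Δ := by
    intro x hx hle
    by_cases hb : BddAbove Δ
    · have := (hclosed x hx ε hεΔ).1 hb
      have hlt : x + ε < sSup Δ := lt_of_le_of_lt hle (hδs hb)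
      rwa [min_eq_left hlt.le] at this
    · exact (hclosed x hx ε hεΔ).2 hb
  -- multiples of ε stay in Δ
  have key : ∀ n : ℕ, ((n : ℝ) + 1) * ε ≤ r + δ → ((n : ℝ) + 1) * ε ∈ Δ := by
    intro n
    induction n with
    | zero => intro _; simpa using hεΔ
    | succ n ih =>
      intro h
      push_cast at h
      have hn : ((n : ℝ) + 1) * ε ≤ r + δ := by nlinarith
      have hmem := ih hn
      have := hstep _ hmem (by nlinarith)
      convert this using 1
      push_cast; ring
  obtain ⟨k, hk⟩ : ∃ k : ℕ, k = ⌈r / ε⌉₊ := ⟨_, rfl⟩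
  have hk1 : 1 ≤ k := hk ▸ Nat.one_le_ceil_iff.mpr (div_pos hr hεpos)
  have hkge : r ≤ (k : ℝ) * ε := by
    have := hk ▸ Nat.le_ceil (r / ε)
    calc r = (r / ε) * ε := by field_simp
    _ ≤ (k : ℝ) * ε := by
        apply mul_le_mul_of_nonneg_right this hεpos.le
  have hklt : (k : ℝ) * ε < r + ε := by
    have h2 : (k : ℝ) < r / ε + 1 := hk ▸ Nat.ceil_lt_add_one (by positivity : (0:ℝ) ≤ r / ε)
    have := mul_lt_mul_of_pos_right h2 hεpos
    calc (k : ℝ) * ε < (r / ε + 1) * ε := this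
    _ = r + ε := by field_simp
  obtain ⟨m, rfl⟩ : ∃ m, k = m + 1 := ⟨k - 1, (Nat.succ_pred_eq_of_pos hk1).symm⟩
  have hmem : ((m : ℝ) + 1) * ε ∈ Δ := by
    apply key
    push_cast at hklt
    have hεδ' : ε < δ := lt_of_lt_of_le hεδ (le_refl _)
    linarith
  refine ⟨((m : ℝ) + 1) * ε, hmem, ?_⟩
  rw [abs_lt]
  push_cast at hkge hklt
  constructor <;> [linarith [hεδ, hδη]; linarith [hεδ, hδη]]
end

section
/- Let ε > 0 and let Δ be a distance value set with inf Δ = 0. Then for any finite metric space (X, d) with diam(X, d) ≤ sup Δ, there exists a metric d' on X taking all nonzero values in Δ such that: (a) d'(x,y) = d(x,y) whenever d(x,y) ∈ Δ; (b) |d'(x,y) − d(x,y)| < ε for all x,y; (c) d(x,y) = d(x',y') implies d'(x,y) = d'(x',y'); and (d) the isometry groups of (X,d) and (X,d') coincide. -/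
theorem stmt4_dense (Δ : Set ℝ) (hne : Δ.Nonempty) (hpos : ∀ x ∈ Δ, 0 < x)
    (hclosed : ∀ x ∈ Δ, ∀ y ∈ Δ,
      (BddAbove Δ → min (x + y) (sSup Δ) ∈ Δ) ∧ (¬ BddAbove Δ → x + y ∈ Δ))
    (hinf : sInf Δ = 0) :
    ∀ u η : ℝ, 0 ≤ u → 0 < η → (BddAbove Δ → u + η ≤ sSup Δ) →
      ∃ v ∈ Δ, u < v ∧ v < u + η := by
  have hsmall : ∀ η : ℝ, 0 < η → ∃ δ ∈ Δ, δ < η := by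
    intro η hη
    exact exists_lt_of_csInf_lt hne (by rw [hinf]; exact hη)
  have hmul : ∀ δ, δ ∈ Δ → ∀ n : ℕ, 1 ≤ n → (BddAbove Δ → (n : ℝ) * δ ≤ sSup Δ) →
      (n : ℝ) * δ ∈ Δ := by
    intro δ hδ n
    induction n with
    | zero => intro h; omega
    | succ n ih =>
      intro _ hle
      have hδ0 : 0 < δ := hpos δ hδ
      rcases Nat.eq_zero_or_pos n with hn | hn
      · subst hn; simpa using hδ
      · have hmono : (n : ℝ) * δ ≤ ((n+1 : ℕ) : ℝ) * δ := by
          push_cast; nlinarith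
        have hnδ : (n : ℝ) * δ ∈ Δ := ih hn (fun hb => le_trans hmono (hle hb))
        have h2 := hclosed _ hnδ _ hδ
        by_cases hb : BddAbove Δ
        · have h3 := h2.1 hb
          have h4 : min ((n : ℝ) * δ + δ) (sSup Δ) = (n : ℝ) * δ + δ := by
            apply min_eq_left
            have := hle hb
            push_cast at this ⊢
            linarith
          rw [h4] at h3
          have : ((n+1 : ℕ) : ℝ) * δ = (n : ℝ) * δ + δ := by push_cast; ring
          rw [this]; exact h3
        · have h3 := h2.2 hb
          have : ((n+1 : ℕ) : ℝ) * δ = (n : ℝ) * δ + δ := by push_cast; ring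
          rw [this]; exact h3
  intro u η hu hη hb
  obtain ⟨δ, hδΔ, hδη⟩ := hsmall η hη
  have hδ0 : 0 < δ := hpos δ hδΔ
  set n : ℕ := ⌊u / δ⌋₊ + 1 with hn
  have h1 : u < (n : ℝ) * δ := by
    have h := Nat.lt_floor_add_one (u / δ)
    rw [div_lt_iff₀ hδ0] at h
    rw [hn]; push_cast; linarith
  have h2 : (n : ℝ) * δ ≤ u + δ := by
    have h := Nat.floor_le (div_nonneg hu hδ0.le)
    have h' := mul_le_mul_of_nonneg_right h hδ0.le
    rw [div_mul_cancel₀ _ hδ0.ne'] at h'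
    rw [hn]; push_cast; linarith
  have h3 : (n : ℝ) * δ < u + η := by linarith
  refine ⟨(n : ℝ) * δ, hmul δ hδΔ n (by omega) (fun hbdd => le_trans h3.le (hb hbdd)), h1, h3⟩

set_option maxHeartbeats 1600000 in
/-- `(Δ, ε)`-remetrization of a finite metric space `(X, d)` with
`diam(X,d) ≤ sup Δ`, for a distance value set `Δ` with `inf Δ = 0`. -/
theorem stmt_4 (Δ : Set ℝ) (hne : Δ.Nonempty) (hpos : ∀ x ∈ Δ, 0 < x)
    (hclosed : ∀ x ∈ Δ, ∀ y ∈ Δ,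
      (BddAbove Δ → min (x + y) (sSup Δ) ∈ Δ) ∧ (¬ BddAbove Δ → x + y ∈ Δ))
    (hinf : sInf Δ = 0)
    (ε : ℝ) (hε : 0 < ε)
    (X : Type) [Fintype X] (d : X → X → ℝ)
    (hd0 : ∀ x, d x x = 0) (hdsep : ∀ x y, d x y = 0 → x = y)
    (hdsymm : ∀ x y, d x y = d y x)
    (hdtri : ∀ x y z, d x z ≤ d x y + d y z)
    (hdiam : BddAbove Δ → ∀ x y, d x y ≤ sSup Δ) :
    ∃ d' : X → X → ℝ,
      (∀ x, d' x x = 0) ∧ (∀ x y, d' x y = 0 → x = y) ∧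
      (∀ x y, d' x y = d' y x) ∧ (∀ x y z, d' x z ≤ d' x y + d' y z) ∧
      (∀ x y, x ≠ y → d' x y ∈ Δ) ∧
      (∀ x y, d x y ∈ Δ → d' x y = d x y) ∧
      (∀ x y, |d' x y - d x y| < ε) ∧
      (∀ x y x' y', d x y = d x' y' → d' x y = d' x' y') ∧
      (∀ φ : X ≃ X, (∀ x y, d (φ x) (φ y) = d x y) ↔ (∀ x y, d' (φ x) (φ y) = d' x y)) := by
  classical
  have hdense := stmt4_dense Δ hne hpos hclosed hinf
  have hdnn : ∀ x y, 0 ≤ d x y := by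
    intro x y
    have h := hdtri x y x
    rw [hd0 x, hdsymm y x] at h
    linarith
  -- the finite set of distance values
  set V : Finset ℝ := Finset.image (fun p : X × X => d p.1 p.2) Finset.univ with hV
  have hdV : ∀ x y : X, d x y ∈ V := by
    intro x y
    rw [hV]
    exact Finset.mem_image.mpr ⟨(x, y), Finset.mem_univ _, rfl⟩
  have hVle : ∀ t ∈ V, BddAbove Δ → t ≤ sSup Δ := by
    intro t ht hb
    rw [hV] at ht
    obtain ⟨p, _, rfl⟩ := Finset.mem_image.mp ht
    exact hdiam hb p.1 p.2
  set V₀ : Finset ℝ := insert 0 V with hV₀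
  have h0V₀ : (0 : ℝ) ∈ V₀ := by rw [hV₀]; exact Finset.mem_insert_self _ _
  have hVV₀ : ∀ t ∈ V, t ∈ V₀ := by
    intro t ht; rw [hV₀]; exact Finset.mem_insert_of_mem ht
  -- minimal positive gap γ
  set T : Finset ℝ :=
    ((V₀ ×ˢ V₀ ×ˢ V₀).image (fun p : ℝ × ℝ × ℝ => p.1 + p.2.1 - p.2.2)).filter
      (fun x => 0 < x) with hT
  set γ : ℝ := if h : T.Nonempty then T.min' h else 1 with hγ
  have hγpos : 0 < γ := by
    rw [hγ]; split_ifs with h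
    · have hm := T.min'_mem h
      exact (Finset.mem_filter.mp hm).2
    · norm_num
  have hγle : ∀ a ∈ V₀, ∀ b ∈ V₀, ∀ c ∈ V₀, c < a + b → γ ≤ a + b - c := by
    intro a ha b hb c hc h
    have hmem : a + b - c ∈ T := by
      rw [hT]
      refine Finset.mem_filter.mpr ⟨Finset.mem_image.mpr ⟨(a, b, c), ?_, rfl⟩, by linarith⟩
      simp only [Finset.mem_product]
      exact ⟨ha, hb, hc⟩
    rw [hγ, dif_pos ⟨_, hmem⟩]
    exact Finset.min'_le _ _ hmem
  -- the set of values needing upward perturbation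
  set S : Finset ℝ :=
    V.filter (fun t => t ∉ Δ ∧ 0 < t ∧ (BddAbove Δ → t < sSup Δ)) with hS
  set N : ℕ := S.card with hN
  have hkN : ∀ t : ℝ, (S.filter (fun s => t < s)).card ≤ N := by
    intro t; rw [hN]; exact Finset.card_filter_le _ _
  set k : ℝ → ℕ := fun t => (S.filter (fun s => t < s)).card with hk
  have hklt : ∀ a ∈ S, ∀ c ∈ S, a < c → k c + 1 ≤ k a := by
    intro a ha c hc h
    have hsub : insert c (S.filter (fun s => c < s)) ⊆ S.filter (fun s => a < s) := by
      intro s hs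
      rcases Finset.mem_insert.mp hs with rfl | hs
      · exact Finset.mem_filter.mpr ⟨hc, h⟩
      · obtain ⟨h1, h2⟩ := Finset.mem_filter.mp hs
        exact Finset.mem_filter.mpr ⟨h1, lt_trans h h2⟩
    have hcard := Finset.card_le_card hsub
    rw [Finset.card_insert_of_notMem (by simp)] at hcard
    rw [hk]
    simpa using hcard
  set σ : ℝ := if h : BddAbove Δ ∧ S.Nonempty then sSup Δ - S.max' h.2 else 1 with hσ
  have hσpos : 0 < σ := by
    rw [hσ]; split_ifs with h
    · have hm := S.max'_mem h.2
      have := (Finset.mem_filter.mp hm).2.2.2 h.1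
      linarith
    · norm_num
  have hσle : BddAbove Δ → ∀ t ∈ S, σ ≤ sSup Δ - t := by
    intro hb t ht
    rw [hσ, dif_pos ⟨hb, ⟨t, ht⟩⟩]
    have := S.le_max' t ht
    linarith
  set m : ℝ := min (min ε γ) σ with hm
  have hmpos : 0 < m := lt_min (lt_min hε hγpos) hσpos
  have hmε : m ≤ ε := le_trans (min_le_left _ _) (min_le_left _ _)
  have hmγ : m ≤ γ := le_trans (min_le_left _ _) (min_le_right _ _)
  have hmσ : m ≤ σ := min_le_right _ _
  set C : ℝ := 2 * (N : ℝ) + 2 with hC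
  have hC2 : (2 : ℝ) ≤ C := by
    rw [hC]; have : (0:ℝ) ≤ (N:ℝ) := Nat.cast_nonneg _; linarith
  set ρ : ℝ := m / (4 * C) with hρ
  have h4C : (0:ℝ) < 4 * C := by linarith
  have hρpos : 0 < ρ := by rw [hρ]; exact div_pos hmpos h4C
  have hCρ : C * ρ = m / 4 := by
    have hCne : C ≠ 0 := ne_of_gt (by linarith : (0:ℝ) < C)
    rw [hρ, mul_div_assoc']
    rw [mul_comm (4:ℝ) C]
    exact mul_div_mul_left m 4 hCne
  have hρm : ρ ≤ m / 8 := by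
    rw [hρ, div_le_div_iff₀ h4C (by norm_num : (0:ℝ) < 8)]
    nlinarith
  have hkwin : ∀ t : ℝ, (2 * ((k t : ℝ)) + 2) * ρ ≤ m / 4 := by
    intro t
    rw [← hCρ]
    have h1 : ((k t : ℝ)) ≤ (N : ℝ) := Nat.cast_le.mpr (by rw [hk]; exact hkN t)
    have h2 : 2 * ((k t : ℝ)) + 2 ≤ C := by rw [hC]; linarith
    exact mul_le_mul_of_nonneg_right h2 hρpos.le
  -- choose perturbed values
  have hex : ∀ t : ℝ, ∃ v : ℝ, t ∈ S →
      v ∈ Δ ∧ t + (2 * (k t : ℝ) + 1) * ρ < v ∧ v < t + (2 * (k t : ℝ) + 2) * ρ := by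
    intro t
    by_cases ht : t ∈ S
    · have htm := ht
      rw [hS] at htm
      obtain ⟨htV, htΔ, ht0, htsup⟩ := Finset.mem_filter.mp htm
      have hknn : (0 : ℝ) ≤ (k t : ℝ) := Nat.cast_nonneg _
      have hwnd : BddAbove Δ → (t + (2 * (k t : ℝ) + 1) * ρ) + ρ ≤ sSup Δ := by
        intro hb
        have h1 := hkwin t
        have h2 := hσle hb t ht
        have h3 : (t + (2 * (k t : ℝ) + 1) * ρ) + ρ = t + (2 * (k t : ℝ) + 2) * ρ := by ring
        rw [h3]
        nlinarith
      obtain ⟨v, hv1, hv2, hv3⟩ := hdense (t + (2 * (k t : ℝ) + 1) * ρ) ρ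
        (by nlinarith) hρpos hwnd
      exact ⟨v, fun _ => ⟨hv1, hv2, by linarith⟩⟩
    · exact ⟨0, fun h => absurd h ht⟩
  choose g hg using hex
  have hwex : ∃ v : ℝ, (BddAbove Δ ∧ sSup Δ ∉ Δ) →
      v ∈ Δ ∧ sSup Δ - ρ < v ∧ v < sSup Δ := by
    by_cases h : BddAbove Δ ∧ sSup Δ ∉ Δ
    · obtain ⟨v, hvΔ, hv⟩ := exists_lt_of_lt_csSup hne
        (show sSup Δ - ρ < sSup Δ by linarith)
      refine ⟨v, fun _ => ⟨hvΔ, hv, lt_of_le_of_ne (le_csSup h.1 hvΔ) ?_⟩⟩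
      intro e
      exact h.2 (e ▸ hvΔ)
    · exact ⟨0, fun hh => absurd hh h⟩
  obtain ⟨w, hw⟩ := hwex
  set G : ℝ → ℝ := fun t => if t ∈ S then g t else
      if t ∉ Δ ∧ 0 < t ∧ t ∈ V then w else t with hG
  have hGdef : ∀ t : ℝ, (t ∈ S ∧ G t = g t) ∨
      (t ∉ S ∧ (t ∉ Δ ∧ 0 < t ∧ t ∈ V) ∧ G t = w) ∨
      (t ∉ S ∧ ¬(t ∉ Δ ∧ 0 < t ∧ t ∈ V) ∧ G t = t) := by
    intro t
    rw [hG]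
    simp only
    split_ifs with h1 h2
    · exact Or.inl ⟨h1, rfl⟩
    · exact Or.inr (Or.inl ⟨h1, h2, rfl⟩)
    · exact Or.inr (Or.inr ⟨h1, h2, rfl⟩)
  have hbr2 : ∀ t, t ∉ S → t ∉ Δ → 0 < t → t ∈ V → BddAbove Δ ∧ t = sSup Δ := by
    intro t htS htΔ ht0 htV
    have hns : ¬(BddAbove Δ → t < sSup Δ) := by
      intro hh
      exact htS (by rw [hS]; exact Finset.mem_filter.mpr ⟨htV, htΔ, ht0, hh⟩)
    push_neg at hns
    obtain ⟨hb, hle⟩ := hns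
    exact ⟨hb, le_antisymm (hVle t htV hb) hle⟩
  have hGS : ∀ t ∈ S, G t = g t := by
    intro t ht
    rcases hGdef t with ⟨_, h⟩ | ⟨h1, _, _⟩ | ⟨h1, _, _⟩ <;> first | exact h | exact absurd ht h1
  have hGΔ : ∀ t ∈ Δ, G t = t := by
    intro t ht
    have htS : t ∉ S := by
      intro hmem
      rw [hS] at hmem
      exact (Finset.mem_filter.mp hmem).2.1 ht
    rcases hGdef t with ⟨h1, _⟩ | ⟨_, h2, _⟩ | ⟨_, _, h3⟩
    · exact absurd h1 htS
    · exact absurd ht h2.1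
    · exact h3
  have hG0 : G 0 = 0 := by
    have h0S : (0:ℝ) ∉ S := by
      intro hmem
      rw [hS] at hmem
      exact lt_irrefl 0 (Finset.mem_filter.mp hmem).2.2.1
    rcases hGdef 0 with ⟨h1, _⟩ | ⟨_, h2, _⟩ | ⟨_, _, h3⟩
    · exact absurd h1 h0S
    · exact absurd h2.2.1 (lt_irrefl 0)
    · exact h3
  have hGmem : ∀ t ∈ V, 0 < t → G t ∈ Δ := by
    intro t htV ht0
    rcases hGdef t with ⟨h1, he⟩ | ⟨h1, h2, he⟩ | ⟨h1, h2, he⟩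
    · rw [he]; exact (hg t h1).1
    · rw [he]
      obtain ⟨hb, hsup⟩ := hbr2 t h1 h2.1 h2.2.1 h2.2.2
      exact (hw ⟨hb, hsup ▸ h2.1⟩).1
    · rw [he]
      by_contra htΔ
      exact h2 ⟨htΔ, ht0, htV⟩
  have hGub : ∀ t : ℝ, G t ≤ t + m / 4 := by
    intro t
    rcases hGdef t with ⟨h1, he⟩ | ⟨h1, h2, he⟩ | ⟨h1, h2, he⟩
    · rw [he]
      have h3 := (hg t h1).2.2
      have h4 := hkwin t
      linarith
    · rw [he]
      obtain ⟨hb, hsup⟩ := hbr2 t h1 h2.1 h2.2.1 h2.2.2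
      have h3 := (hw ⟨hb, hsup ▸ h2.1⟩).2.2
      rw [← hsup] at h3
      linarith
    · rw [he]; linarith
  have hGlb : ∀ t : ℝ, t - ρ < G t := by
    intro t
    rcases hGdef t with ⟨h1, he⟩ | ⟨h1, h2, he⟩ | ⟨h1, h2, he⟩
    · rw [he]
      have h3 := (hg t h1).2.1
      have hknn : (0:ℝ) ≤ (k t : ℝ) := Nat.cast_nonneg _
      nlinarith
    · rw [he]
      obtain ⟨hb, hsup⟩ := hbr2 t h1 h2.1 h2.2.1 h2.2.2
      have h3 := (hw ⟨hb, hsup ▸ h2.1⟩).2.1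
      rw [← hsup] at h3
      exact h3
    · rw [he]; linarith
  have hGge : ∀ t : ℝ, (BddAbove Δ → t ≠ sSup Δ) → t ≤ G t := by
    intro t hcond
    rcases hGdef t with ⟨h1, he⟩ | ⟨h1, h2, he⟩ | ⟨h1, h2, he⟩
    · rw [he]
      have h3 := (hg t h1).2.1
      have hknn : (0:ℝ) ≤ (k t : ℝ) := Nat.cast_nonneg _
      nlinarith
    · obtain ⟨hb, hsup⟩ := hbr2 t h1 h2.1 h2.2.1 h2.2.2
      exact absurd hsup (hcond hb)
    · rw [he]
  have hGnn : ∀ t : ℝ, 0 ≤ t → 0 ≤ G t := by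
    intro t ht
    rcases hGdef t with ⟨h1, he⟩ | ⟨h1, h2, he⟩ | ⟨h1, h2, he⟩
    · rw [he]; exact (hpos _ (hg t h1).1).le
    · rw [he]
      obtain ⟨hb, hsup⟩ := hbr2 t h1 h2.1 h2.2.1 h2.2.2
      exact (hpos _ (hw ⟨hb, hsup ▸ h2.1⟩).1).le
    · rw [he]; exact ht
  have hGmono : ∀ s ∈ V₀, ∀ t ∈ V₀, s < t → G s < G t := by
    intro s hs t ht hst
    have h1 := hGub s
    have h2 := hGlb t
    have h3 := hγle t ht 0 h0V₀ s hs (by linarith)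
    linarith
  have htri : ∀ a ∈ V, ∀ b ∈ V, ∀ c ∈ V, 0 ≤ a → 0 ≤ b → 0 ≤ c → c ≤ a + b →
      G c ≤ G a + G b := by
    intro a haV b hbV c hcV ha0 hb0 hc0 hcab
    have haV₀ := hVV₀ a haV
    have hbV₀ := hVV₀ b hbV
    have hcV₀ := hVV₀ c hcV
    rcases eq_or_lt_of_le hc0 with hc | hc
    · rw [← hc, hG0]
      have := hGnn a ha0
      have := hGnn b hb0
      linarith
    rcases eq_or_lt_of_le ha0 with ha | ha
    · have hGa : G a = 0 := by rw [← ha, hG0]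
      have hcb : c ≤ b := by linarith
      rcases eq_or_lt_of_le hcb with h | h
      · rw [h, hGa]; linarith
      · have := hGmono c hcV₀ b hbV₀ h
        rw [hGa]; linarith
    rcases eq_or_lt_of_le hb0 with hb | hb
    · have hGb : G b = 0 := by rw [← hb, hG0]
      have hca : c ≤ a := by linarith
      rcases eq_or_lt_of_le hca with h | h
      · rw [h, hGb]; linarith
      · have := hGmono c hcV₀ a haV₀ h
        rw [hGb]; linarith
    rcases lt_or_eq_of_le hcab with hlt | heq
    · -- strict triangle inequality
      have h1 := hGub c
      have h2 := hGlb a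
      have h3 := hGlb b
      have h4 := hγle a haV₀ b hbV₀ c hcV₀ hlt
      linarith
    · -- degenerate case c = a + b
      have habc : a < c ∧ b < c := ⟨by linarith, by linarith⟩
      have hGa : a ≤ G a := hGge a (by
        intro hbdd e
        have hcs := hVle c hcV hbdd
        rw [← e] at hcs
        linarith [habc.1])
      have hGb : b ≤ G b := hGge b (by
        intro hbdd e
        have hcs := hVle c hcV hbdd
        rw [← e] at hcs
        linarith [habc.2])
      by_cases hcΔ : c ∈ Δ
      · rw [hGΔ c hcΔ]; linarith
      by_cases hcs : BddAbove Δ → c < sSup Δ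
      · have hcS : c ∈ S := by
          rw [hS]; exact Finset.mem_filter.mpr ⟨hcV, hcΔ, hc, hcs⟩
        have hGc : G c < c + (2 * (k c : ℝ) + 2) * ρ := by
          rw [hGS c hcS]; exact (hg c hcS).2.2
        have hnboth : ¬(a ∈ Δ ∧ b ∈ Δ) := by
          rintro ⟨haΔ, hbΔ⟩
          by_cases hbdd : BddAbove Δ
          · have h1 := (hclosed a haΔ b hbΔ).1 hbdd
            rw [← heq, min_eq_left (le_of_lt (hcs hbdd))] at h1
            exact hcΔ h1
          · have h1 := (hclosed a haΔ b hbΔ).2 hbdd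
            rw [← heq] at h1
            exact hcΔ h1
      -- helper for the two symmetric cases
        have key : ∀ u v : ℝ, u ∈ V → v ∈ V → 0 < u → 0 < v → u < c → v < c →
            v ∉ Δ → c = u + v → u ≤ G u → G c ≤ G u + G v := by
          intro u v huV hvV hu0 hv0 huc hvc hvΔ hcuv hGu
          have hvS : v ∈ S := by
            rw [hS]
            refine Finset.mem_filter.mpr ⟨hvV, hvΔ, hv0, fun hbdd => lt_trans hvc (hcs hbdd)⟩
          have hkv := hklt v hvS c hcS hvc
          have hGv : v + (2 * (k v : ℝ) + 1) * ρ < G v := by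
            rw [hGS v hvS]; exact (hg v hvS).2.1
          have hcast : (k c : ℝ) + 1 ≤ (k v : ℝ) := by exact_mod_cast hkv
          have hmul : (2 * (k c : ℝ) + 3) * ρ ≤ (2 * (k v : ℝ) + 1) * ρ :=
            mul_le_mul_of_nonneg_right (by linarith) hρpos.le
          linarith
        rcases not_and_or.mp hnboth with haΔ | hbΔ
        · rw [show G a + G b = G b + G a by ring]
          exact key b a hbV haV hb ha habc.2 habc.1 haΔ (by linarith) hGb
        · exact key a b haV hbV ha hb habc.1 habc.2 hbΔ heq hGa
      · push_neg at hcs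
        obtain ⟨hbdd, hle⟩ := hcs
        have hcsup : c = sSup Δ := le_antisymm (hVle c hcV hbdd) hle
        have hcS : c ∉ S := by
          intro hmem
          rw [hS] at hmem
          exact absurd ((Finset.mem_filter.mp hmem).2.2.2 hbdd) (not_lt.mpr hle)
        have hGc : G c = w := by
          rcases hGdef c with ⟨h1, _⟩ | ⟨_, _, he⟩ | ⟨_, h2, _⟩
          · exact absurd h1 hcS
          · exact he
          · exact absurd ⟨hcΔ, hc, hcV⟩ h2
        have hw' := hw ⟨hbdd, hcsup ▸ hcΔ⟩
        have : w < sSup Δ := hw'.2.2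
        rw [hGc, ← hcsup] at *
        linarith
  have hGinj : ∀ s ∈ V, ∀ t ∈ V, G s = G t → s = t := by
    intro s hs t ht h
    rcases lt_trichotomy s t with hlt | he | hgt
    · exact absurd h (ne_of_lt (hGmono s (hVV₀ s hs) t (hVV₀ t ht) hlt))
    · exact he
    · exact absurd h.symm (ne_of_lt (hGmono t (hVV₀ t ht) s (hVV₀ s hs) hgt))
  refine ⟨fun x y => G (d x y), ?_, ?_, ?_, ?_, ?_, ?_, ?_, ?_, ?_⟩
  · intro x
    show G (d x x) = 0
    rw [hd0]; exact hG0
  · intro x y h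
    by_contra hxy
    have hne' : d x y ≠ 0 := fun e => hxy (hdsep x y e)
    have hpos' : 0 < d x y := lt_of_le_of_ne (hdnn x y) (Ne.symm hne')
    exact absurd h (ne_of_gt (hpos _ (hGmem _ (hdV x y) hpos')))
  · intro x y
    show G (d x y) = G (d y x)
    rw [hdsymm x y]
  · intro x y z
    exact htri _ (hdV x y) _ (hdV y z) _ (hdV x z) (hdnn x y) (hdnn y z) (hdnn x z)
      (hdtri x y z)
  · intro x y hxy
    have hne' : d x y ≠ 0 := fun e => hxy (hdsep x y e)
    exact hGmem _ (hdV x y) (lt_of_le_of_ne (hdnn x y) (Ne.symm hne'))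
  · intro x y h; exact hGΔ _ h
  · intro x y
    show |G (d x y) - d x y| < ε
    have h1 := hGub (d x y)
    have h2 := hGlb (d x y)
    rw [abs_sub_lt_iff]
    constructor <;> linarith
  · intro x y x' y' h
    show G (d x y) = G (d x' y')
    rw [h]
  · intro φ
    constructor
    · intro h x y
      show G (d (φ x) (φ y)) = G (d x y)
      rw [h x y]
    · intro h x y
      have hh : G (d (φ x) (φ y)) = G (d x y) := h x y
      exact hGinj _ (hdV (φ x) (φ y)) _ (hdV x y) hh
end

section
/- Let (X, d, μ) be a metric-measure space with concentration function α_X, where α_X(0) = 1/2 and for ε > 0, α_X(ε) = 1 − inf{μ(B_ε) : B ⊆ X measurable, μ(B) ≥ 1/2}, with B_ε the open ε-neighborhood of B. Let X = ∏_{i=1}^n X_i be a product of metric-measure spaces (X_i, d_i, μ_i) with diam X_i = a_i, equipped with the product measure and the Hamming metric d(x,y) = Σ_{i=1}^n d_i(x_i, y_i). Then α_X(ε) ≤ 2 e^{−ε²/(8 Σ_{i=1}^n a_i²)}. -/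
open MeasureTheory Real
open scoped ENNReal

lemma quad_scalar {s m : ℝ} (hs : 0 ≤ s) (hm0 : 0 ≤ m) :
    (Real.exp s + 1) * m ≤ Real.exp (s ^ 2 / 4) + Real.exp s * m ^ 2 := by
  have h1 : Real.exp (s^2/8) * Real.exp (s^2/8) = Real.exp (s^2/4) := by
    rw [← Real.exp_add]; ring_nf
  have h2 : Real.exp (s/2) * Real.exp (s/2) = Real.exp s := by
    rw [← Real.exp_add]; ring_nf
  have h3 : Real.exp (s/2) * Real.exp (-(s/2)) = 1 := by
    rw [← Real.exp_add]; simp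
  have hA : Real.exp s + 1 = Real.exp (s/2) * (Real.exp (s/2) + Real.exp (-(s/2))) := by
    rw [mul_add, h2, h3]
  have hcosh : Real.exp (s/2) + Real.exp (-(s/2)) ≤ 2 * Real.exp (s^2/8) := by
    have hc := Real.cosh_le_exp_half_sq (s/2)
    rw [Real.cosh_eq] at hc
    have he : (s/2)^2/2 = s^2/8 := by ring
    rw [he] at hc
    linarith
  have hAle : Real.exp s + 1 ≤ 2 * (Real.exp (s/2) * Real.exp (s^2/8)) := by
    rw [hA]
    nlinarith [Real.exp_pos (s/2)]
  nlinarith [sq_nonneg (Real.exp (s^2/8) - Real.exp (s/2) * m),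
    mul_le_mul_of_nonneg_right hAle hm0]

lemma pointwise_real {D E q g : ℝ} (hD : 0 < D) (hE : 1 ≤ E) (hg0 : 0 < g) (hgq : g ≤ q) :
    min (D / g) (E * (D / q)) + E * D * g / q ^ 2 ≤ (E + 1) * (D / q) := by
  have hq0 : 0 < q := lt_of_lt_of_le hg0 hgq
  rcases le_total (E * g) q with h | h
  · have h1 : min (D/g) (E*(D/q)) ≤ E*(D/q) := min_le_right _ _
    have h2 : E * D * g / q^2 ≤ D / q := by
      rw [div_le_div_iff₀ (by positivity) hq0]
      nlinarith [mul_le_mul_of_nonneg_left h (by positivity : (0:ℝ) ≤ D*q)]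
    have h3 : E*(D/q) + D/q = (E+1)*(D/q) := by ring
    linarith
  · have h1 : min (D/g) (E*(D/q)) ≤ D/g := min_le_left _ _
    have key : q^2 + E * g^2 ≤ (E+1) * (q * g) := by
      nlinarith [mul_nonneg (sub_nonneg.2 hgq) (sub_nonneg.2 h)]
    have h2 : D / g + E * D * g / q^2 ≤ (E+1) * (D/q) := by
      rw [div_add_div _ _ (ne_of_gt hg0) (by positivity), div_le_iff₀ (by positivity)]
      have hrw : (E+1)*(D/q)*(g*q^2) = D*((E+1)*(q*g)) := by field_simp
      rw [hrw]
      nlinarith [mul_le_mul_of_nonneg_left key hD.le]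
    linarith

lemma step_real {Dr s mr qr : ℝ} (hDr : 0 ≤ Dr) (hs : 0 ≤ s) (hmr : 0 ≤ mr) (hq : 0 < qr) :
    (Real.exp s + 1) * (Dr / qr) * mr
      ≤ Dr * Real.exp (s ^ 2 / 4) + Real.exp s * Dr / qr ^ 2 * (mr * mr) := by
  have h := quad_scalar (s := s) (m := mr / qr) hs (by positivity)
  have h2 := mul_le_mul_of_nonneg_left h hDr
  calc (Real.exp s + 1) * (Dr / qr) * mr = Dr * ((Real.exp s + 1) * (mr / qr)) := by
        field_simp
    _ ≤ Dr * (Real.exp (s ^ 2 / 4) + Real.exp s * (mr / qr) ^ 2) := h2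
    _ = Dr * Real.exp (s ^ 2 / 4) + Real.exp s * Dr / qr ^ 2 * (mr * mr) := by
        field_simp

open ENNReal in
lemma crux {X : Type} [MeasurableSpace X] (μ₀ : Measure X) [IsProbabilityMeasure μ₀]
    (g : X → ℝ≥0∞) (hgm : Measurable g) (q : ℝ≥0∞) (Dr s : ℝ) (hDr : 0 < Dr) (hs : 0 ≤ s)
    (hq0 : q ≠ 0) (hq1 : q ≤ 1) (hg : ∀ᵐ t ∂μ₀, g t ≤ q)
    (hm0 : ∫⁻ t, g t ∂μ₀ ≠ 0) :
    ∫⁻ t, min (ENNReal.ofReal Dr / g t)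
        (ENNReal.ofReal (Real.exp s) * (ENNReal.ofReal Dr / q)) ∂μ₀
      ≤ ENNReal.ofReal (Dr * Real.exp (s ^ 2 / 4)) / ∫⁻ t, g t ∂μ₀ := by
  set D := ENNReal.ofReal Dr with hD
  set E := ENNReal.ofReal (Real.exp s) with hE
  have hqt : q ≠ ⊤ := (lt_of_le_of_lt hq1 ENNReal.one_lt_top).ne
  have hD0 : D ≠ 0 := (ENNReal.ofReal_pos.mpr hDr).ne'
  have hDt : D ≠ ⊤ := ENNReal.ofReal_ne_top
  have hEt : E ≠ ⊤ := ENNReal.ofReal_ne_top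
  set m₁ := ∫⁻ t, g t ∂μ₀ with hm₁
  have hm₁q : m₁ ≤ q := by
    calc m₁ ≤ ∫⁻ _, q ∂μ₀ := lintegral_mono_ae hg
    _ = q := by simp
  have hm₁t : m₁ ≠ ⊤ := ne_top_of_le_ne_top hqt hm₁q
  set c := E * D / q ^ 2 with hc
  have hct : c ≠ ⊤ := by
    refine (ENNReal.div_lt_top (ENNReal.mul_ne_top hEt hDt) ?_).ne
    exact pow_ne_zero 2 hq0
  have hpt : ∀ᵐ t ∂μ₀, min (D / g t) (E * (D / q)) + c * g t ≤ (E + 1) * (D / q) := by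
    filter_upwards [hg] with t hgt
    rcases eq_or_ne (g t) 0 with h0 | h0
    · rw [h0, mul_zero, add_zero, ENNReal.div_zero hD0]
      rw [min_eq_right le_top]
      exact mul_le_mul_left (self_le_add_right E 1) _
    · have hgtop : g t ≠ ⊤ := ne_top_of_le_ne_top hqt hgt
      set gr := (g t).toReal with hgr
      set qr := q.toReal with hqr
      have hgr0 : 0 < gr := ENNReal.toReal_pos h0 hgtop
      have hqr0 : 0 < qr := ENNReal.toReal_pos hq0 hqt
      have hgrq : gr ≤ qr := (ENNReal.toReal_le_toReal hgtop hqt).mpr hgt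
      have hgeq : g t = ENNReal.ofReal gr := (ENNReal.ofReal_toReal hgtop).symm
      have hqeq : q = ENNReal.ofReal qr := (ENNReal.ofReal_toReal hqt).symm
      rw [hgeq, hqeq, hc, hD, hE, hqeq]
      have hA : ENNReal.ofReal Dr / ENNReal.ofReal gr = ENNReal.ofReal (Dr / gr) :=
        (ENNReal.ofReal_div_of_pos hgr0).symm
      have hB : ENNReal.ofReal (Real.exp s) * (ENNReal.ofReal Dr / ENNReal.ofReal qr)
          = ENNReal.ofReal (Real.exp s * (Dr / qr)) := by
        rw [← ENNReal.ofReal_div_of_pos hqr0, ← ENNReal.ofReal_mul (Real.exp_nonneg s)]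
      have hCC : ENNReal.ofReal (Real.exp s) * ENNReal.ofReal Dr / (ENNReal.ofReal qr) ^ 2
            * ENNReal.ofReal gr
          = ENNReal.ofReal (Real.exp s * Dr / qr ^ 2 * gr) := by
        rw [← ENNReal.ofReal_mul (Real.exp_nonneg s), ← ENNReal.ofReal_pow hqr0.le,
          ← ENNReal.ofReal_div_of_pos (pow_pos hqr0 2),
          ← ENNReal.ofReal_mul (by positivity)]
      have hDD : (ENNReal.ofReal (Real.exp s) + 1) * (ENNReal.ofReal Dr / ENNReal.ofReal qr)
          = ENNReal.ofReal ((Real.exp s + 1) * (Dr / qr)) := by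
        rw [← ENNReal.ofReal_one, ← ENNReal.ofReal_add (Real.exp_nonneg s) zero_le_one,
          ← ENNReal.ofReal_div_of_pos hqr0, ← ENNReal.ofReal_mul (by positivity)]
      rw [hA, hB, hCC, hDD]
      have hmin : min (ENNReal.ofReal (Dr / gr)) (ENNReal.ofReal (Real.exp s * (Dr / qr)))
          = ENNReal.ofReal (min (Dr / gr) (Real.exp s * (Dr / qr))) := by
        rcases le_total (Dr / gr) (Real.exp s * (Dr / qr)) with hle | hle
        · rw [min_eq_left (ENNReal.ofReal_le_ofReal hle), min_eq_left hle]
        · rw [min_eq_right (ENNReal.ofReal_le_ofReal hle), min_eq_right hle]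
      rw [hmin, ← ENNReal.ofReal_add (le_min (by positivity) (by positivity)) (by positivity)]
      refine ENNReal.ofReal_le_ofReal ?_
      have hpr := pointwise_real hDr (Real.one_le_exp hs) hgr0 hgrq
      have : Real.exp s * Dr * gr / qr ^ 2 = Real.exp s * Dr / qr ^ 2 * gr := by ring
      linarith [hpr, this.symm.le]
  have hmeasdiv : Measurable fun t => D / g t := by
    simp_rw [div_eq_mul_inv]; exact hgm.inv.const_mul D
  have hmeasmin : Measurable fun t => min (D / g t) (E * (D / q)) :=
    hmeasdiv.min measurable_const
  have hint : (∫⁻ t, min (D / g t) (E * (D / q)) ∂μ₀) + c * m₁ ≤ (E + 1) * (D / q) := by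
    have h := lintegral_mono_ae hpt
    rwa [lintegral_add_left hmeasmin, lintegral_const_mul c hgm, lintegral_const,
      measure_univ, mul_one] at h
  set I := ∫⁻ t, min (D / g t) (E * (D / q)) ∂μ₀ with hI
  rw [ENNReal.le_div_iff_mul_le (Or.inl hm0) (Or.inl hm₁t)]
  have hIm : I * m₁ + c * m₁ * m₁ ≤ ((E + 1) * (D / q)) * m₁ := by
    calc I * m₁ + c * m₁ * m₁ = (I + c * m₁) * m₁ := by ring
    _ ≤ _ := mul_le_mul_left hint m₁
  have hfin : c * m₁ * m₁ ≠ ⊤ := ENNReal.mul_ne_top (ENNReal.mul_ne_top hct hm₁t) hm₁t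
  have hq1' : (E + 1) * (D / q) ≠ ⊤ := by
    refine ENNReal.mul_ne_top ?_ (ENNReal.div_lt_top hDt hq0).ne
    exact ENNReal.add_ne_top.mpr ⟨hEt, ENNReal.one_ne_top⟩
  have hstep : ((E + 1) * (D / q)) * m₁ ≤ ENNReal.ofReal (Dr * Real.exp (s ^ 2 / 4)) + c * m₁ * m₁ := by
    have hLfin : ((E + 1) * (D / q)) * m₁ ≠ ⊤ := ENNReal.mul_ne_top hq1' hm₁t
    have hRfin : ENNReal.ofReal (Dr * Real.exp (s ^ 2 / 4)) + c * m₁ * m₁ ≠ ⊤ :=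
      ENNReal.add_ne_top.mpr ⟨ENNReal.ofReal_ne_top, hfin⟩
    rw [← ENNReal.toReal_le_toReal hLfin hRfin]
    have hqr0 : 0 < q.toReal := ENNReal.toReal_pos hq0 hqt
    have hmr0 : 0 ≤ m₁.toReal := ENNReal.toReal_nonneg
    have e1 : (((E + 1) * (D / q)) * m₁).toReal
        = (Real.exp s + 1) * (Dr / q.toReal) * m₁.toReal := by
      rw [ENNReal.toReal_mul, ENNReal.toReal_mul, ENNReal.toReal_add hEt ENNReal.one_ne_top,
        ENNReal.toReal_div, hE, ENNReal.toReal_ofReal (Real.exp_nonneg s), ENNReal.toReal_one,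
        hD, ENNReal.toReal_ofReal hDr.le]
    have e2 : (ENNReal.ofReal (Dr * Real.exp (s ^ 2 / 4)) + c * m₁ * m₁).toReal
        = Dr * Real.exp (s ^ 2 / 4) + Real.exp s * Dr / q.toReal ^ 2 * (m₁.toReal * m₁.toReal) := by
      rw [ENNReal.toReal_add ENNReal.ofReal_ne_top hfin,
        ENNReal.toReal_ofReal (by positivity), ENNReal.toReal_mul, ENNReal.toReal_mul,
        hc, ENNReal.toReal_div, ENNReal.toReal_mul, ENNReal.toReal_pow,
        hE, ENNReal.toReal_ofReal (Real.exp_nonneg s), hD, ENNReal.toReal_ofReal hDr.le]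
      ring
    rw [e1, e2]
    exact step_real hDr.le hs hmr0 hqr0
  have hfinal := le_trans hIm hstep
  exact (ENNReal.add_le_add_iff_right hfin).mp hfinal


lemma ofReal_exp_min (lam x y : ℝ) (hlam : 0 ≤ lam) :
    ENNReal.ofReal (Real.exp (lam * min x y))
      = min (ENNReal.ofReal (Real.exp (lam * x))) (ENNReal.ofReal (Real.exp (lam * y))) := by
  rcases le_total x y with h | h
  · rw [min_eq_left h, (min_eq_left (ENNReal.ofReal_le_ofReal
      (Real.exp_le_exp.mpr (mul_le_mul_of_nonneg_left h hlam))))]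
  · rw [min_eq_right h, (min_eq_right (ENNReal.ofReal_le_ofReal
      (Real.exp_le_exp.mpr (mul_le_mul_of_nonneg_left h hlam))))]

theorem key (n : ℕ) (Xi : Fin n → Type) [mXi : ∀ i, MetricSpace (Xi i)]
    [msXi : ∀ i, MeasurableSpace (Xi i)] (μi : ∀ i, Measure (Xi i))
    [pμ : ∀ i, IsProbabilityMeasure (μi i)] (a : Fin n → ℝ)
    (hd : ∀ i (x y : Xi i), dist x y ≤ a i)
    (ε₀ lam : ℝ) (hε₀ : 0 ≤ ε₀) (hlam : 0 ≤ lam)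
    (W : Type) [mW : MeasurableSpace W]
    (C : Set (W × ∀ i, Xi i)) (hC : MeasurableSet C) :
    ∃ H : W × (∀ i, Xi i) → ℝ, Measurable H ∧ (∀ p, 0 ≤ H p) ∧ (∀ p ∈ C, H p = 0) ∧
      (∀ ε ≤ ε₀, ∀ w y, H (w, y) < ε → ∃ x, (w, x) ∈ C ∧ ∑ i, dist (x i) (y i) < ε) ∧
      (∀ w : W, 0 < Measure.pi μi {y | (w, y) ∈ C} →
        ∫⁻ y, ENNReal.ofReal (Real.exp (lam * H (w, y))) ∂(Measure.pi μi)
          ≤ ENNReal.ofReal (Real.exp (lam ^ 2 * (∑ i, a i ^ 2) / 4))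
            / Measure.pi μi {y | (w, y) ∈ C}) := by
  induction n generalizing W with
  | zero =>
    refine ⟨(Cᶜ).indicator fun _ => ε₀, measurable_const.indicator hC.compl, ?_, ?_, ?_, ?_⟩
    · intro p
      by_cases hp : p ∈ C
      · simp [Set.indicator_of_notMem, hp]
      · simp [Set.indicator_of_mem, hp, hε₀]
    · intro p hp
      simp [Set.indicator_of_notMem, hp]
    · intro ε hεε w y hy
      by_cases hyC : (w, y) ∈ C
      · refine ⟨y, hyC, ?_⟩
        simp only [Set.indicator_of_notMem (by simpa using hyC : (w,y) ∉ Cᶜ)] at hy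
        simpa using hy
      · exfalso
        rw [Set.indicator_of_mem (by simpa using hyC)] at hy
        linarith
    · intro w hw
      have hne : {y | (w, y) ∈ C}.Nonempty := nonempty_of_measure_ne_zero hw.ne'
      obtain ⟨z, hz⟩ := hne
      have hU : ∀ y : (∀ i : Fin 0, Xi i), (w, y) ∈ C := by
        intro y
        have : y = z := funext fun i => i.elim0
        rwa [this]
      have huniv : {y | (w, y) ∈ C} = Set.univ := Set.eq_univ_iff_forall.mpr hU
      rw [huniv, measure_univ]
      have : ∀ y : (∀ i : Fin 0, Xi i),
          ENNReal.ofReal (Real.exp (lam * (Cᶜ).indicator (fun _ => ε₀) (w, y))) = 1 := by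
        intro y
        rw [Set.indicator_of_notMem (by simpa using hU y)]
        simp
      simp only [this]
      rw [lintegral_const, measure_univ, mul_one]
      simp
  | succ n IH =>
    set i0 : Fin (n + 1) := 0 with hi0
    set e : (∀ i, Xi i) ≃ᵐ Xi i0 × ∀ j, Xi (i0.succAbove j) :=
      MeasurableEquiv.piFinSuccAbove Xi i0 with he
    have mp : MeasurePreserving (⇑e) (Measure.pi μi)
        ((μi i0).prod (Measure.pi fun j => μi (i0.succAbove j))) :=
      measurePreserving_piFinSuccAbove μi i0
    -- nonempty and a ≥ 0
    have hXne : ∀ i, Nonempty (Xi i) := by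
      intro i
      rcases (nonempty_of_measure_ne_zero
        (by simp : μi i Set.univ ≠ 0)) with ⟨x, _⟩
      exact ⟨x⟩
    have ha0 : ∀ i, 0 ≤ a i := by
      intro i
      obtain ⟨x⟩ := hXne i
      have := hd i x x
      rwa [dist_self] at this
    -- section set C'
    set C' : Set ((W × Xi i0) × ∀ j, Xi (i0.succAbove j)) :=
      {q | (q.1.1, e.symm (q.1.2, q.2)) ∈ C} with hC'def
    have hφ : Measurable fun q : (W × Xi i0) × ∀ j, Xi (i0.succAbove j) =>
        (q.1.1, e.symm (q.1.2, q.2)) :=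
      (measurable_fst.fst).prodMk
        (e.symm.measurable.comp ((measurable_fst.snd).prodMk measurable_snd))
    have hC' : MeasurableSet C' := hφ hC
    obtain ⟨H₁, hH₁m, hH₁0, hH₁z, hH₁b, hH₁i⟩ :=
      IH (fun j => Xi (i0.succAbove j)) (fun j => μi (i0.succAbove j))
        (fun j => a (i0.succAbove j)) (fun j x y => hd _ x y) (W × Xi i0) C' hC'
    -- projection-substitute Chat
    set Dset : Set ((W × ∀ j, Xi (i0.succAbove j)) × Xi i0) :=
      {r | (r.1.1, e.symm (r.2, r.1.2)) ∈ C} with hDsetdef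
    have hψ : Measurable fun r : (W × ∀ j, Xi (i0.succAbove j)) × Xi i0 =>
        (r.1.1, e.symm (r.2, r.1.2)) :=
      (measurable_fst.fst).prodMk
        (e.symm.measurable.comp (measurable_snd.prodMk measurable_fst.snd))
    have hDset : MeasurableSet Dset := hψ hC
    set b : W × (∀ j, Xi (i0.succAbove j)) → ℝ≥0∞ :=
      fun p => μi i0 (Prod.mk p ⁻¹' Dset) with hbdef
    have hb : Measurable b := measurable_measure_prodMk_left hDset
    set Chat : Set (W × ∀ j, Xi (i0.succAbove j)) := {p | 0 < b p} with hChatdef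
    have hChat : MeasurableSet Chat := hb measurableSet_Ioi
    obtain ⟨H₂, hH₂m, hH₂0, hH₂z, hH₂b, hH₂i⟩ :=
      IH (fun j => Xi (i0.succAbove j)) (fun j => μi (i0.succAbove j))
        (fun j => a (i0.succAbove j)) (fun j x y => hd _ x y) W Chat hChat
    -- the function H
    refine ⟨fun p => min (H₁ ((p.1, (e p.2).1), (e p.2).2)) (a i0 + H₂ (p.1, (e p.2).2)),
      ?_, ?_, ?_, ?_, ?_⟩
    · have he2 : Measurable fun p : W × (∀ i, Xi i) => e p.2 :=
        e.measurable.comp measurable_snd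
      exact (hH₁m.comp ((measurable_fst.prodMk he2.fst).prodMk he2.snd)).min
        ((hH₂m.comp (measurable_fst.prodMk he2.snd)).const_add (a i0))
    · intro p
      exact le_min (hH₁0 _) (add_nonneg (ha0 i0) (hH₂0 _))
    · intro p hp
      have hmem : ((p.1, (e p.2).1), (e p.2).2) ∈ C' := by
        show (p.1, e.symm ((e p.2).1, (e p.2).2)) ∈ C
        rw [show ((e p.2).1, (e p.2).2) = e p.2 from rfl, e.symm_apply_apply]
        exact hp
      show min (H₁ ((p.1, (e p.2).1), (e p.2).2)) (a i0 + H₂ (p.1, (e p.2).2)) = 0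
      rw [hH₁z _ hmem]
      exact min_eq_left (add_nonneg (ha0 i0) (hH₂0 _))
    · intro ε hεε w y hy
      rcases min_lt_iff.mp hy with h1 | h2
      · obtain ⟨x', hx'C, hx'd⟩ := hH₁b ε hεε (w, (e y).1) (e y).2 h1
        refine ⟨e.symm ((e y).1, x'), hx'C, ?_⟩
        rw [Fin.sum_univ_succAbove (fun i => dist ((e.symm ((e y).1, x')) i) (y i)) i0]
        have hsame : (e.symm ((e y).1, x')) i0 = (e y).1 := by
          simp [he, MeasurableEquiv.piFinSuccAbove_symm_apply]
        have habove : ∀ j, (e.symm ((e y).1, x')) (i0.succAbove j) = x' j := by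
          intro j
          simp [he, MeasurableEquiv.piFinSuccAbove_symm_apply]
        have hy0 : (e y).1 = y i0 := by simp [he, MeasurableEquiv.piFinSuccAbove_apply]
        have hy2 : ∀ j, (e y).2 j = y (i0.succAbove j) := fun j => rfl
        simp only [habove]
        rw [hsame, hy0, dist_self]
        have : ∀ j, dist (x' j) (y (i0.succAbove j)) = dist (x' j) ((e y).2 j) := by
          intro j; rw [hy2]
        rw [Finset.sum_congr rfl fun j _ => this j]
        simpa using hx'd
      · have hH2lt : H₂ (w, (e y).2) < ε - a i0 := by linarith
        have hεa : ε - a i0 ≤ ε₀ := by linarith [ha0 i0]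
        obtain ⟨x'', hx''C, hx''d⟩ := hH₂b (ε - a i0) hεa w (e y).2 hH2lt
        have : (Prod.mk (w, x'') ⁻¹' Dset).Nonempty :=
          nonempty_of_measure_ne_zero (hx''C.ne')
        obtain ⟨t', ht'⟩ := this
        refine ⟨e.symm (t', x''), ht', ?_⟩
        rw [Fin.sum_univ_succAbove (fun i => dist ((e.symm (t', x'')) i) (y i)) i0]
        have hsame : (e.symm (t', x'')) i0 = t' := by
          simp [he, MeasurableEquiv.piFinSuccAbove_symm_apply]
        have habove : ∀ j, (e.symm (t', x'')) (i0.succAbove j) = x'' j := by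
          intro j; simp [he, MeasurableEquiv.piFinSuccAbove_symm_apply]
        have hy2 : ∀ j, (e y).2 j = y (i0.succAbove j) := fun j => rfl
        rw [hsame]
        simp only [habove]
        have hsum : ∑ j, dist (x'' j) (y (i0.succAbove j)) < ε - a i0 := by
          have : ∀ j, dist (x'' j) (y (i0.succAbove j)) = dist (x'' j) ((e y).2 j) := by
            intro j; rw [hy2]
          rw [Finset.sum_congr rfl fun j _ => this j]
          exact hx''d
        have hdt : dist t' (y i0) ≤ a i0 := hd i0 t' (y i0)
        linarith
    · intro w hw
      -- abbreviations
      have hVm : MeasurableSet {p : Xi i0 × ∀ j, Xi (i0.succAbove j) | (w, e.symm p) ∈ C} :=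
        (measurable_const.prodMk e.symm.measurable) hC
      set π' : Measure (∀ j, Xi (i0.succAbove j)) := Measure.pi fun j => μi (i0.succAbove j)
        with hπ'
      set V : Set (Xi i0 × ∀ j, Xi (i0.succAbove j)) := {p | (w, e.symm p) ∈ C} with hVdef
      have hsec : {y | (w, y) ∈ C} = ⇑e ⁻¹' V := by
        ext z
        constructor
        · intro hz
          show (w, e.symm (e z)) ∈ C
          rwa [e.symm_apply_apply]
        · intro hz
          have h2 : (w, e.symm (e z)) ∈ C := hz
          rwa [e.symm_apply_apply] at h2
      have hπsec : Measure.pi μi {y | (w, y) ∈ C} = ((μi i0).prod π') V := by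
        rw [hsec]
        exact mp.measure_preimage hVm.nullMeasurableSet
      set m' : Xi i0 → ℝ≥0∞ := fun t => π' (Prod.mk t ⁻¹' V) with hm'def
      have hm'meas : Measurable m' := measurable_measure_prodMk_left hVm
      have hprodV : ((μi i0).prod π') V = ∫⁻ t, m' t ∂(μi i0) := Measure.prod_apply hVm
      set q : ℝ≥0∞ := π' {y' | (w, y') ∈ Chat} with hqdef
      have hqsm : MeasurableSet {y' | (w, y') ∈ Chat} :=
        (measurable_const.prodMk measurable_id) hChat
      have hq1 : q ≤ 1 := prob_le_one
      -- a.e. bound m' ≤ q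
      set V2 : Set (Xi i0 × ∀ j, Xi (i0.succAbove j)) :=
        V ∩ (Prod.snd ⁻¹' {y' | (w, y') ∉ Chat}) with hV2def
      have hV2m : MeasurableSet V2 := hVm.inter (measurable_snd hqsm.compl)
      have hzero : ((μi i0).prod π') V2 = 0 := by
        rw [Measure.prod_apply_symm hV2m]
        have hpt : ∀ y', (μi i0) ((fun t => (t, y')) ⁻¹' V2) = 0 := by
          intro y'
          by_cases hy' : (w, y') ∈ Chat
          · have hemp : ((fun t => (t, y')) ⁻¹' V2) = ∅ := by
              ext t
              simp only [Set.mem_preimage, Set.mem_empty_iff_false, iff_false]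
              intro ht
              exact ht.2 hy'
            rw [hemp, measure_empty]
          · have hb0 : b (w, y') = 0 := by
              have := hy'
              rw [hChatdef, Set.mem_setOf_eq, not_lt] at this
              exact le_antisymm this zero_le
            refine measure_mono_null ?_ hb0
            intro t ht
            exact ht.1
        simp only [hpt]
        exact lintegral_zero
      have haeV2 : ∀ᵐ t ∂(μi i0), π' (Prod.mk t ⁻¹' V2) = 0 := by
        have hint0 : ∫⁻ t, π' (Prod.mk t ⁻¹' V2) ∂(μi i0) = 0 := by
          rw [← Measure.prod_apply hV2m]
          exact hzero
        exact (lintegral_eq_zero_iff (measurable_measure_prodMk_left hV2m)).mp hint0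
      have hm'q : ∀ᵐ t ∂(μi i0), m' t ≤ q := by
        filter_upwards [haeV2] with t ht
        have hsub : Prod.mk t ⁻¹' V ⊆ (Prod.mk t ⁻¹' V2) ∪ {y' | (w, y') ∈ Chat} := by
          intro y' hy'
          by_cases hc : (w, y') ∈ Chat
          · exact Or.inr hc
          · exact Or.inl ⟨hy', hc⟩
        calc m' t ≤ π' ((Prod.mk t ⁻¹' V2) ∪ {y' | (w, y') ∈ Chat}) := measure_mono hsub
        _ ≤ π' (Prod.mk t ⁻¹' V2) + q := measure_union_le _ _
        _ = q := by rw [ht, zero_add]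
      have hm₁ : ∫⁻ t, m' t ∂(μi i0) = Measure.pi μi {y | (w, y) ∈ C} := by
        rw [hπsec, hprodV]
      have hm₁0 : (∫⁻ t, m' t ∂(μi i0)) ≠ 0 := by
        rw [hm₁]
        exact hw.ne'
      have hq0 : q ≠ 0 := by
        intro h0
        apply hm₁0
        have hle : ∫⁻ t, m' t ∂(μi i0) ≤ ∫⁻ _, q ∂(μi i0) := lintegral_mono_ae hm'q
        rw [lintegral_const, measure_univ, mul_one, h0] at hle
        exact le_antisymm hle zero_le
      -- main chain
      have hGmeas : Measurable fun p : Xi i0 × (∀ j, Xi (i0.succAbove j)) =>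
          ENNReal.ofReal (Real.exp (lam * min (H₁ ((w, p.1), p.2)) (a i0 + H₂ (w, p.2)))) := by
        apply Measurable.ennreal_ofReal
        apply Real.measurable_exp.comp
        apply Measurable.const_mul
        exact (hH₁m.comp ((measurable_const.prodMk measurable_fst).prodMk
          measurable_snd)).min ((hH₂m.comp (measurable_const.prodMk
          measurable_snd)).const_add (a i0))
      have hH₂meas : Measurable fun y' : ∀ j, Xi (i0.succAbove j) =>
          ENNReal.ofReal (Real.exp (lam * H₂ (w, y'))) :=
        Measurable.ennreal_ofReal (Real.measurable_exp.comp
          ((hH₂m.comp (measurable_const.prodMk measurable_id)).const_mul lam))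
      have hQ : ∫⁻ y', ENNReal.ofReal (Real.exp (lam * H₂ (w, y'))) ∂π'
          ≤ ENNReal.ofReal (Real.exp (lam ^ 2 * (∑ j, a (i0.succAbove j) ^ 2) / 4)) / q :=
        hH₂i w (pos_iff_ne_zero.mpr hq0)
      calc ∫⁻ y, ENNReal.ofReal (Real.exp (lam *
              min (H₁ ((w, (e y).1), (e y).2)) (a i0 + H₂ (w, (e y).2)))) ∂(Measure.pi μi)
          = ∫⁻ p, ENNReal.ofReal (Real.exp (lam *
              min (H₁ ((w, p.1), p.2)) (a i0 + H₂ (w, p.2)))) ∂((μi i0).prod π') :=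
            mp.lintegral_comp hGmeas
        _ = ∫⁻ t, ∫⁻ y', ENNReal.ofReal (Real.exp (lam *
              min (H₁ ((w, t), y')) (a i0 + H₂ (w, y')))) ∂π' ∂(μi i0) :=
            lintegral_prod _ hGmeas.aemeasurable
        _ ≤ ∫⁻ t, min
              (ENNReal.ofReal (Real.exp (lam ^ 2 * (∑ j, a (i0.succAbove j) ^ 2) / 4)) / m' t)
              (ENNReal.ofReal (Real.exp (lam * a i0)) *
                (ENNReal.ofReal (Real.exp (lam ^ 2 * (∑ j, a (i0.succAbove j) ^ 2) / 4)) / q))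
              ∂(μi i0) := by
            apply lintegral_mono_ae
            filter_upwards [hm'q] with t _
            have hGsplit : ∀ y', ENNReal.ofReal (Real.exp (lam *
                      min (H₁ ((w, t), y')) (a i0 + H₂ (w, y'))))
                = min (ENNReal.ofReal (Real.exp (lam * H₁ ((w, t), y'))))
                  (ENNReal.ofReal (Real.exp (lam * a i0)) *
                    ENNReal.ofReal (Real.exp (lam * H₂ (w, y')))) := by
              intro y'
              rw [ofReal_exp_min lam _ _ hlam, mul_add, Real.exp_add,
                ENNReal.ofReal_mul (Real.exp_nonneg _)]
            have hinner : ∫⁻ y', ENNReal.ofReal (Real.exp (lam *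
                  min (H₁ ((w, t), y')) (a i0 + H₂ (w, y')))) ∂π'
                ≤ min (∫⁻ y', ENNReal.ofReal (Real.exp (lam * H₁ ((w, t), y'))) ∂π')
                  (ENNReal.ofReal (Real.exp (lam * a i0)) *
                    ∫⁻ y', ENNReal.ofReal (Real.exp (lam * H₂ (w, y'))) ∂π') := by
              refine le_min (lintegral_mono fun y' => ?_) ?_
              · rw [hGsplit]
                exact min_le_left _ _
              · calc ∫⁻ y', ENNReal.ofReal (Real.exp (lam *
                      min (H₁ ((w, t), y')) (a i0 + H₂ (w, y')))) ∂π'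
                    ≤ ∫⁻ y', ENNReal.ofReal (Real.exp (lam * a i0)) *
                        ENNReal.ofReal (Real.exp (lam * H₂ (w, y'))) ∂π' := by
                      refine lintegral_mono fun y' => ?_
                      rw [hGsplit]
                      exact min_le_right _ _
                  _ = ENNReal.ofReal (Real.exp (lam * a i0)) *
                        ∫⁻ y', ENNReal.ofReal (Real.exp (lam * H₂ (w, y'))) ∂π' :=
                      lintegral_const_mul _ hH₂meas
            rcases eq_or_ne (m' t) 0 with h0 | h0
            · rw [h0, ENNReal.div_zero (ENNReal.ofReal_pos.mpr (Real.exp_pos _)).ne',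
                min_eq_right le_top]
              exact le_trans hinner (le_trans (min_le_right _ _) (mul_le_mul_right hQ _))
            · have hP : ∫⁻ y', ENNReal.ofReal (Real.exp (lam * H₁ ((w, t), y'))) ∂π'
                  ≤ ENNReal.ofReal (Real.exp (lam ^ 2 * (∑ j, a (i0.succAbove j) ^ 2) / 4))
                    / m' t :=
                hH₁i (w, t) (pos_iff_ne_zero.mpr h0)
              exact le_trans hinner (min_le_min hP (mul_le_mul_right hQ _))
        _ ≤ ENNReal.ofReal (Real.exp (lam ^ 2 * (∑ j, a (i0.succAbove j) ^ 2) / 4) *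
              Real.exp ((lam * a i0) ^ 2 / 4)) / ∫⁻ t, m' t ∂(μi i0) :=
            crux (μi i0) m' hm'meas q _ (lam * a i0) (Real.exp_pos _)
              (mul_nonneg hlam (ha0 i0)) hq0 hq1 hm'q hm₁0
        _ = ENNReal.ofReal (Real.exp (lam ^ 2 * (∑ i, a i ^ 2) / 4))
              / Measure.pi μi {y | (w, y) ∈ C} := by
            rw [hm₁]
            congr 2
            rw [← Real.exp_add]
            congr 1
            rw [Fin.sum_univ_succAbove (fun i => a i ^ 2) i0]
            ring

/-- concentration of measure for products with the Hamming metric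
(martingale inequality): for every measurable `B` of measure at least `1/2`, its
`ε`-neighborhood in the Hamming metric has measure at least
`1 - 2 exp(-ε² / (8 Σ aᵢ²))`; equivalently, the concentration function of the
product satisfies `α(ε) ≤ 2 exp(-ε² / (8 Σ aᵢ²))`. -/
theorem stmt_5 (n : ℕ) (Xi : Fin n → Type) [∀ i, MetricSpace (Xi i)]
    [∀ i, MeasurableSpace (Xi i)] [∀ i, BorelSpace (Xi i)]
    (μi : ∀ i, Measure (Xi i)) [∀ i, IsProbabilityMeasure (μi i)]
    (a : Fin n → ℝ)
    (hbdd : ∀ i, Bornology.IsBounded (Set.univ : Set (Xi i)))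
    (ha : ∀ i, Metric.diam (Set.univ : Set (Xi i)) = a i)
    (ε : ℝ) (hε : 0 < ε)
    (B : Set (∀ i, Xi i)) (hB : MeasurableSet B)
    (hBhalf : Measure.pi μi B ≥ 1 / 2) :
    Measure.pi μi {y | ∃ x ∈ B, (∑ i, dist (x i) (y i)) < ε}
      ≥ ENNReal.ofReal (1 - 2 * Real.exp (-(ε ^ 2) / (8 * ∑ i, (a i) ^ 2))) := by
  classical
  set S : ℝ := ∑ i, (a i) ^ 2 with hS
  set β : ℝ := 2 * Real.exp (-(ε ^ 2) / (8 * S)) with hβ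
  by_cases htriv : 1 - β ≤ 0
  · rw [ge_iff_le, ENNReal.ofReal_of_nonpos htriv]
    exact zero_le
  push_neg at htriv
  have hβ0 : 0 ≤ β := by positivity
  have hSnn : 0 ≤ S := Finset.sum_nonneg fun i _ => sq_nonneg _
  have hS0 : 0 < S := by
    rcases eq_or_lt_of_le hSnn with h0 | h
    · exfalso
      have hβ2 : β = 2 := by
        rw [hβ, ← h0]
        norm_num
      rw [hβ2] at htriv
      linarith
    · exact h
  have hd : ∀ i (x y : Xi i), dist x y ≤ a i := by
    intro i x y
    have h := Metric.dist_le_diam_of_mem (hbdd i) (Set.mem_univ x) (Set.mem_univ y)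
    rwa [ha i] at h
  set lam : ℝ := 2 * ε / S with hlamdef
  have hlam0 : 0 ≤ lam := by positivity
  obtain ⟨H, hHm, hH0, hHz, hHb, hHi⟩ := key n Xi μi a hd ε lam hε.le hlam0 Unit
    {p : Unit × (∀ i, Xi i) | p.2 ∈ B} (measurable_snd hB)
  set T : Set (∀ i, Xi i) := {y | ε ≤ H ((), y)} with hT
  have hTm : MeasurableSet T :=
    measurableSet_le measurable_const (hHm.comp (measurable_const.prodMk measurable_id))
  have hBpos : (0 : ℝ≥0∞) < Measure.pi μi B := lt_of_lt_of_le (by norm_num) hBhalf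
  have hintB : ∫⁻ y, ENNReal.ofReal (Real.exp (lam * H ((), y))) ∂(Measure.pi μi)
      ≤ ENNReal.ofReal (Real.exp (lam ^ 2 * S / 4)) / Measure.pi μi B := hHi () hBpos
  have hMarkov : Measure.pi μi T ≤ ENNReal.ofReal β := by
    have hsub : T ⊆ {y | ENNReal.ofReal (Real.exp (lam * ε))
        ≤ ENNReal.ofReal (Real.exp (lam * H ((), y)))} := by
      intro y hy
      exact ENNReal.ofReal_le_ofReal (Real.exp_le_exp.mpr (mul_le_mul_of_nonneg_left hy hlam0))
    have hmeas : AEMeasurable (fun y => ENNReal.ofReal (Real.exp (lam * H ((), y))))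
        (Measure.pi μi) :=
      (Measurable.ennreal_ofReal (Real.measurable_exp.comp
        ((hHm.comp (measurable_const.prodMk measurable_id)).const_mul lam))).aemeasurable
    have h2 := meas_ge_le_lintegral_div hmeas
      (ε := ENNReal.ofReal (Real.exp (lam * ε)))
      (ENNReal.ofReal_pos.mpr (Real.exp_pos _)).ne' ENNReal.ofReal_ne_top
    have h4 : ENNReal.ofReal (Real.exp (lam ^ 2 * S / 4)) / Measure.pi μi B
        ≤ ENNReal.ofReal (Real.exp (lam ^ 2 * S / 4)) / (1 / 2 : ℝ≥0∞) :=
      ENNReal.div_le_div_left hBhalf _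
    have h5 : ENNReal.ofReal (Real.exp (lam ^ 2 * S / 4)) / (1 / 2 : ℝ≥0∞)
        = ENNReal.ofReal (2 * Real.exp (lam ^ 2 * S / 4)) := by
      rw [div_eq_mul_inv, one_div, inv_inv, ENNReal.ofReal_mul (by norm_num : (0:ℝ) ≤ 2),
        ENNReal.ofReal_ofNat, mul_comm]
    have h6 : ENNReal.ofReal (2 * Real.exp (lam ^ 2 * S / 4))
          / ENNReal.ofReal (Real.exp (lam * ε))
        = ENNReal.ofReal ((2 * Real.exp (lam ^ 2 * S / 4)) / Real.exp (lam * ε)) :=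
      (ENNReal.ofReal_div_of_pos (Real.exp_pos _)).symm
    have h7 : (2 * Real.exp (lam ^ 2 * S / 4)) / Real.exp (lam * ε)
        = 2 * Real.exp (lam ^ 2 * S / 4 - lam * ε) := by
      rw [Real.exp_sub]
      ring
    have h8 : lam ^ 2 * S / 4 - lam * ε = -(ε ^ 2) / S := by
      rw [hlamdef]
      field_simp
      ring
    have h9 : 2 * Real.exp (-(ε ^ 2) / S) ≤ β := by
      rw [hβ]
      have hmono : -(ε ^ 2) / S ≤ -(ε ^ 2) / (8 * S) := by
        rw [neg_div, neg_div, neg_le_neg_iff]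
        apply div_le_div_of_nonneg_left (sq_nonneg ε) hS0
        linarith
      have := Real.exp_le_exp.mpr hmono
      linarith
    calc Measure.pi μi T
        ≤ Measure.pi μi {y | ENNReal.ofReal (Real.exp (lam * ε))
            ≤ ENNReal.ofReal (Real.exp (lam * H ((), y)))} := measure_mono hsub
      _ ≤ (∫⁻ y, ENNReal.ofReal (Real.exp (lam * H ((), y))) ∂(Measure.pi μi))
            / ENNReal.ofReal (Real.exp (lam * ε)) := h2
      _ ≤ ENNReal.ofReal (2 * Real.exp (lam ^ 2 * S / 4))
            / ENNReal.ofReal (Real.exp (lam * ε)) := by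
          rw [← h5]
          exact ENNReal.div_le_div_right (le_trans hintB h4) _
      _ = ENNReal.ofReal (2 * Real.exp (lam ^ 2 * S / 4 - lam * ε)) := by rw [h6, h7]
      _ ≤ ENNReal.ofReal β := by
          apply ENNReal.ofReal_le_ofReal
          rw [h8]
          exact h9
  have hcover : (1 : ℝ≥0∞) ≤ Measure.pi μi {y | ∃ x ∈ B, (∑ i, dist (x i) (y i)) < ε}
      + Measure.pi μi T := by
    have huniv : (Set.univ : Set (∀ i, Xi i))
        ⊆ {y | ∃ x ∈ B, (∑ i, dist (x i) (y i)) < ε} ∪ T := by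
      intro y _
      by_cases hy : H ((), y) < ε
      · obtain ⟨x, hx1, hx2⟩ := hHb ε le_rfl () y hy
        exact Or.inl ⟨x, hx1, hx2⟩
      · exact Or.inr (not_lt.mp hy)
    calc (1 : ℝ≥0∞) = Measure.pi μi Set.univ := measure_univ.symm
      _ ≤ Measure.pi μi ({y | ∃ x ∈ B, (∑ i, dist (x i) (y i)) < ε} ∪ T) :=
          measure_mono huniv
      _ ≤ _ := measure_union_le _ _
  have hsum1 : ENNReal.ofReal (1 - β) + ENNReal.ofReal β = 1 := by
    rw [← ENNReal.ofReal_add (by linarith) hβ0]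
    norm_num
  rw [ge_iff_le]
  have hfinal : ENNReal.ofReal (1 - β) + ENNReal.ofReal β
      ≤ Measure.pi μi {y | ∃ x ∈ B, (∑ i, dist (x i) (y i)) < ε} + ENNReal.ofReal β := by
    rw [hsum1]
    exact le_trans hcover (add_le_add_right hMarkov _)
  exact (ENNReal.add_le_add_iff_right ENNReal.ofReal_ne_top).mp hfinal
end

section
/- Let G be a topological group, V an open neighborhood of the identity, and {K_n : n ∈ ℕ⁺} a sequence of compact subgroups with normalized Haar measures μ_n. Suppose there are finite families B_n of Borel subsets of K_n such that (i) for distinct B, C ∈ B_n, VB ∩ C = ∅; (ii) lim_n μ_n(⋃B_n) = 1; and (iii) lim_n sup{μ_n(B) : B ∈ B_n} = 0. Then there exist M ∈ ℕ⁺ and Borel sets A_n ⊆ K_n for n ≥ M such that μ_n(A_n) ≥ 1/2 for all n ≥ M and limsup_n μ_n(V A_n) ≤ 3/4. -/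
open MeasureTheory Filter Pointwise

lemma stmt7_aux {α : Type*} [MeasurableSpace α] (μ : Measure α) [IsProbabilityMeasure μ]
    (T : Finset (Set α))
    (hη : ∀ s ∈ T, (μ s).toReal < 1/8)
    (hbig : (1:ℝ)/2 ≤ (μ (⋃ s ∈ T, s)).toReal) :
    ∃ F : Finset (Set α), F ⊆ T ∧ 1/2 ≤ (μ (⋃ s ∈ F, s)).toReal ∧
      (μ (⋃ s ∈ F, s)).toReal < 5/8 := by
  classical
  have hne : (T.powerset.filter fun F => 1/2 ≤ (μ (⋃ s ∈ F, s)).toReal).Nonempty :=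
    ⟨T, by simpa using hbig⟩
  obtain ⟨F, hF, hmin⟩ := Finset.exists_min_image _ Finset.card hne
  simp only [Finset.mem_filter, Finset.mem_powerset] at hF
  obtain ⟨hFT, hF2⟩ := hF
  refine ⟨F, hFT, hF2, ?_⟩
  have hFne : F.Nonempty := by
    rcases Finset.eq_empty_or_nonempty F with h | h
    · exfalso; rw [h] at hF2; simp at hF2; linarith
    · exact h
  obtain ⟨s, hs⟩ := hFne
  have herase : ¬ (1/2 ≤ (μ (⋃ t ∈ F.erase s, t)).toReal) := by
    intro hcon
    have h1 : F.card ≤ (F.erase s).card :=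
      hmin _ (Finset.mem_filter.mpr ⟨Finset.mem_powerset.mpr
        ((Finset.erase_subset _ _).trans hFT), hcon⟩)
    have h2 := Finset.card_erase_lt_of_mem hs
    omega
  push_neg at herase
  have hsub : (⋃ t ∈ F, t) ⊆ (⋃ t ∈ F.erase s, t) ∪ s := by
    intro x hx
    simp only [Set.mem_iUnion, exists_prop] at hx
    obtain ⟨t, ht, hxt⟩ := hx
    by_cases hts : t = s
    · right; exact hts ▸ hxt
    · left; exact Set.mem_iUnion₂.mpr ⟨t, Finset.mem_erase.mpr ⟨hts, ht⟩, hxt⟩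
  have hle : μ (⋃ t ∈ F, t) ≤ μ (⋃ t ∈ F.erase s, t) + μ s :=
    (measure_mono hsub).trans (measure_union_le _ _)
  have h1 : (μ (⋃ t ∈ F, t)).toReal ≤ (μ (⋃ t ∈ F.erase s, t)).toReal + (μ s).toReal := by
    rw [← ENNReal.toReal_add (measure_ne_top μ _) (measure_ne_top μ _)]
    exact ENNReal.toReal_mono (ENNReal.add_ne_top.mpr ⟨measure_ne_top μ _, measure_ne_top μ _⟩) hle
  have h2 := hη s (hFT hs)
  linarith

/-- from a `V`-dissipating sequence of compact subgroups one extracts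
Borel sets `A n ⊆ K n` of measure at least `1/2` with `limsup μ n (V * A n) ≤ 3/4`. -/
theorem stmt_7 {G : Type} [Group G] [TopologicalSpace G] [IsTopologicalGroup G]
    [MeasurableSpace G] [BorelSpace G]
    (V : Set G) (hVopen : IsOpen V) (hV1 : (1 : G) ∈ V)
    (K : ℕ → Subgroup G) (hcompact : ∀ n, IsCompact (K n : Set G))
    (μ : ℕ → Measure G)
    (hprob : ∀ n, IsProbabilityMeasure (μ n))
    (hsupp : ∀ n, μ n (K n : Set G) = 1)
    (hinv : ∀ n, ∀ g ∈ K n, ∀ A : Set G, MeasurableSet A →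
      μ n ((fun x => g * x) ⁻¹' A) = μ n A)
    (𝓑 : ℕ → Finset (Set G))
    (hBorel : ∀ n, ∀ s ∈ 𝓑 n, MeasurableSet s ∧ s ⊆ (K n : Set G))
    (hsep : ∀ n, ∀ s ∈ 𝓑 n, ∀ t ∈ 𝓑 n, s ≠ t → (V * s) ∩ t = ∅)
    (hunion : Tendsto (fun n => (μ n (⋃ s ∈ 𝓑 n, s)).toReal) atTop (nhds 1))
    (hsmall : ∀ η : ℝ, 0 < η → ∃ N : ℕ, ∀ n ≥ N, ∀ s ∈ 𝓑 n, (μ n s).toReal < η) :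
    ∃ M : ℕ, ∃ A : ℕ → Set G,
      (∀ n ≥ M, MeasurableSet (A n) ∧ A n ⊆ (K n : Set G) ∧
        1 / 2 ≤ (μ n (A n)).toReal) ∧
      Filter.atTop.limsup (fun n => (μ n (V * A n)).toReal) ≤ 3 / 4 := by
  classical
  have := hprob
  obtain ⟨N₁, hN₁⟩ := hsmall (1/8) (by norm_num)
  have hev : ∀ᶠ n in atTop, (7:ℝ)/8 ≤ (μ n (⋃ s ∈ 𝓑 n, s)).toReal :=
    hunion.eventually (eventually_ge_nhds (by norm_num))
  obtain ⟨N₂, hN₂⟩ := eventually_atTop.mp hev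
  set M := max N₁ N₂ with hM
  have key : ∀ n, M ≤ n → ∃ A : Set G, MeasurableSet A ∧ A ⊆ (K n : Set G) ∧
      1/2 ≤ (μ n A).toReal ∧ (μ n (V * A)).toReal ≤ 3/4 := by
    intro n hn
    haveI := hprob n
    have hub : (7:ℝ)/8 ≤ (μ n (⋃ s ∈ 𝓑 n, s)).toReal := hN₂ n (le_trans (le_max_right _ _) hn)
    obtain ⟨F, hFT, hF1, hF2⟩ := stmt7_aux (μ n) (𝓑 n)
      (fun s hs => hN₁ n (le_trans (le_max_left _ _) hn) s hs) (by linarith)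
    set A : Set G := ⋃ s ∈ F, s with hA
    set R : Set G := ⋃ t ∈ (𝓑 n \ F), t with hR
    have hAm : MeasurableSet A :=
      F.measurableSet_biUnion (fun s hs => (hBorel n s (hFT hs)).1)
    have hRm : MeasurableSet R :=
      (𝓑 n \ F).measurableSet_biUnion (fun s hs => (hBorel n s (Finset.mem_sdiff.mp hs).1).1)
    have hAK : A ⊆ (K n : Set G) :=
      Set.iUnion₂_subset fun s hs => (hBorel n s (hFT hs)).2
    have hdisj : Disjoint (V * A) R := by
      rw [Set.disjoint_left]
      rintro x hx hxR
      obtain ⟨v, hv, a, ha, rfl⟩ := hx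
      simp only [hA, Set.mem_iUnion, exists_prop] at ha
      obtain ⟨s, hsF, has⟩ := ha
      simp only [hR, Set.mem_iUnion, exists_prop] at hxR
      obtain ⟨t, htF, hxt⟩ := hxR
      obtain ⟨ht𝓑, htF'⟩ := Finset.mem_sdiff.mp htF
      have hst : s ≠ t := fun h => htF' (h ▸ hsF)
      have : v * a ∈ (V * s) ∩ t := ⟨⟨v, hv, a, has, rfl⟩, hxt⟩
      rw [hsep n s (hFT hsF) t ht𝓑 hst] at this
      exact this
    have hVAopen : IsOpen (V * A) := hVopen.mul_right
    have hsum : μ n (V * A) + μ n R ≤ 1 := by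
      rw [← measure_union hdisj hRm]
      calc μ n (V * A ∪ R) ≤ μ n Set.univ := measure_mono (Set.subset_univ _)
        _ = 1 := measure_univ
    have hsum' : (μ n (V * A)).toReal + (μ n R).toReal ≤ 1 := by
      rw [← ENNReal.toReal_add (measure_ne_top _ _) (measure_ne_top _ _)]
      have := ENNReal.toReal_mono (by simp) hsum
      simpa using this
    have hcov : (⋃ s ∈ 𝓑 n, s) ⊆ A ∪ R := by
      intro x hx
      simp only [Set.mem_iUnion, exists_prop] at hx
      obtain ⟨t, ht, hxt⟩ := hx
      by_cases htF : t ∈ F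
      · left; exact Set.mem_iUnion₂.mpr ⟨t, htF, hxt⟩
      · right; exact Set.mem_iUnion₂.mpr ⟨t, Finset.mem_sdiff.mpr ⟨ht, htF⟩, hxt⟩
    have hcov' : (μ n (⋃ s ∈ 𝓑 n, s)).toReal ≤ (μ n A).toReal + (μ n R).toReal := by
      rw [← ENNReal.toReal_add (measure_ne_top _ _) (measure_ne_top _ _)]
      exact ENNReal.toReal_mono
        (ENNReal.add_ne_top.mpr ⟨measure_ne_top _ _, measure_ne_top _ _⟩)
        ((measure_mono hcov).trans (measure_union_le _ _))
    exact ⟨A, hAm, hAK, hF1, by linarith⟩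
  choose! A hA1 hA2 hA3 hA4 using key
  refine ⟨M, A, fun n hn => ⟨hA1 n hn, hA2 n hn, hA3 n hn⟩, ?_⟩
  apply Filter.limsup_le_of_le
  · exact isCoboundedUnder_le_of_le (x := (0:ℝ)) (atTop : Filter ℕ) (fun n => ENNReal.toReal_nonneg)
  · exact eventually_atTop.mpr ⟨M, fun n hn => hA4 n hn⟩
end

section
/- For any scale (n_k) (an increasing sequence of positive integers with n_k dividing n_{k+1}), the direct limit group G_𝔫 of the symmetric groups Sym({0,...,n_k−1}) under the block-diagonal embeddings φ_k(g)(j·n_k + i) = j·n_k + g(i) (for 0 ≤ j < n_{k+1}/n_k, 0 ≤ i < n_k) is mixed identity free (MIF): for every n ≥ 1 and every word w ∈ (G_𝔫 * F_n) \ G_𝔫 (F_n free of rank n), there exist g_1,...,g_n ∈ G_𝔫 with w(g_1,...,g_n) ≠ e. -/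
open scoped Pointwise

set_option linter.unusedSectionVars false

namespace Stmt11

open Monoid Monoid.Coprod

abbrev Letter (I : Type) := I × Bool

variable {I : Type} {C H : Type*}

section FW
variable [Group C] [Group H]

def gpow (σ : I → H) (l : Letter I) : H := if l.2 then σ l.1 else (σ l.1)⁻¹

def evF (inc : C →* H) (σ : I → H) : C → List (Letter I × C) → H
  | a, [] => inc a
  | a, x :: L => evF inc σ a L * gpow σ x.1 * inc x.2

/-- reducedness relation: `x` earlier in list = later in word; middle constant is `y.2`. -/
def Rr : Letter I × C → Letter I × C → Prop :=
  fun x y => (x.1.1 = y.1.1 ∧ y.1.2 = !x.1.2) → y.2 ≠ 1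

open Classical in
noncomputable def push : (C × List (Letter I × C)) → (C ⊕ Letter I) → C × List (Letter I × C)
  | (a, []), .inl g => (a * g, [])
  | (a, x :: L), .inl g => (a, (x.1, x.2 * g) :: L)
  | (a, []), .inr l => (a, [(l, 1)])
  | (a, x :: L), .inr l =>
      if x.2 = 1 ∧ x.1.1 = l.1 ∧ x.1.2 = !l.2 then (a, L) else (a, (l, 1) :: x :: L)

theorem evF_push (inc : C →* H) (σ : I → H) (W : C × List (Letter I × C)) (s : C ⊕ Letter I) :
    evF inc σ (push W s).1 (push W s).2 =
      evF inc σ W.1 W.2 * Sum.elim inc (gpow σ) s := by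
  obtain ⟨a, L⟩ := W
  cases s with
  | inl g =>
    cases L with
    | nil => simp [push, evF, map_mul]
    | cons x L => simp [push, evF, map_mul, mul_assoc]
  | inr l =>
    cases L with
    | nil => simp [push, evF, mul_assoc]
    | cons x L =>
      by_cases h : x.2 = 1 ∧ x.1.1 = l.1 ∧ x.1.2 = !l.2
      · simp only [push, if_pos h]
        obtain ⟨h1, h2, h3⟩ := h
        have hg : gpow σ x.1 * gpow σ l = 1 := by
          rw [gpow, gpow, h2, h3]
          cases hl : l.2 <;> simp
        simp only [evF, h1, map_one, mul_one, Sum.elim_inr]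
        rw [mul_assoc, hg, mul_one]
      · simp only [push, if_neg h, evF, map_one, mul_one, Sum.elim_inr]

theorem red_push (W : C × List (Letter I × C)) (s : C ⊕ Letter I)
    (hW : W.2.Chain' Rr) : (push W s).2.Chain' Rr := by
  obtain ⟨a, L⟩ := W
  cases s with
  | inl g =>
    cases L with
    | nil => simp [push, List.Chain']
    | cons x L =>
      simp only [push]
      cases L with
      | nil => simp [List.Chain']
      | cons y L =>
        simp only [List.Chain', List.isChain_cons_cons] at hW ⊢
        exact ⟨fun h => hW.1 h, hW.2⟩
  | inr l =>
    cases L with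
    | nil => simp [push, Rr, List.Chain']
    | cons x L =>
      classical
      by_cases h : x.2 = 1 ∧ x.1.1 = l.1 ∧ x.1.2 = !l.2
      · simp only [push, if_pos h]
        exact (List.isChain_cons.mp hW).2
      · simp only [push, if_neg h]
        refine List.isChain_cons_cons.mpr ⟨?_, hW⟩
        exact fun hp h1 => h ⟨h1, hp.1.symm, hp.2⟩

theorem evF_foldl [Group C] [Group H] (inc : C →* H) (σ : I → H)
    (A : List (C ⊕ Letter I)) (W : C × List (Letter I × C)) :
    evF inc σ (A.foldl push W).1 (A.foldl push W).2 =
      evF inc σ W.1 W.2 * (A.map (Sum.elim inc (gpow σ))).prod := by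
  induction A generalizing W with
  | nil => simp
  | cons s A ih =>
    rw [List.foldl_cons, ih, evF_push]
    simp [mul_assoc]

theorem red_foldl [Group C] (A : List (C ⊕ Letter I)) (W : C × List (Letter I × C))
    (hW : W.2.Chain' Rr) : ((A.foldl push W).2).Chain' Rr := by
  induction A generalizing W with
  | nil => exact hW
  | cons s A ih => exact ih _ (red_push W s hW)

end FW

section Rep

variable [Group C] [DecidableEq I]

/-- Interpret a formal word in the coproduct. -/
noncomputable def toCop : C → List (Letter I × C) → Monoid.Coprod C (FreeGroup I) :=
  evF Coprod.inl (fun i => Coprod.inr (FreeGroup.of i))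

def gfr (l : Letter I) : FreeGroup I := if l.2 then FreeGroup.of l.1 else (FreeGroup.of l.1)⁻¹

theorem gfr_eq_mk (l : Letter I) : gfr l = FreeGroup.mk [l] := by
  obtain ⟨i, e⟩ := l
  cases e
  · show (FreeGroup.of i)⁻¹ = _
    rw [FreeGroup.of, FreeGroup.inv_mk]
    simp [FreeGroup.invRev]
  · rfl

theorem prod_map_gfr (L : List (Letter I)) : (L.map (gfr (I := I))).prod = FreeGroup.mk L := by
  induction L with
  | nil => simp [← FreeGroup.one_eq_mk]
  | cons x L ih =>
    rw [List.map_cons, List.prod_cons, ih, gfr_eq_mk, FreeGroup.mul_mk]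
    rfl

/-- atoms of a generator of the coproduct -/
def ex : (C ⊕ FreeGroup I) → List (C ⊕ Letter I)
  | .inl a => [.inl a]
  | .inr b => b.toWord.map .inr

theorem prod_ex (s : C ⊕ FreeGroup I) :
    (((ex s).map (Sum.elim (Coprod.inl : C →* Monoid.Coprod C (FreeGroup I))
      (gpow fun i => Coprod.inr (FreeGroup.of i)))).prod) = Coprod.mk (FreeMonoid.of s) := by
  cases s with
  | inl a => simp [ex, Coprod.mk_of_inl]
  | inr b =>
    rw [Coprod.mk_of_inr]
    have h1 : ∀ l : Letter I, (Sum.elim (Coprod.inl : C →* Monoid.Coprod C (FreeGroup I))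
        (gpow fun i => Coprod.inr (FreeGroup.of i))) (Sum.inr l) = Coprod.inr (gfr l) := by
      intro l
      obtain ⟨i, e⟩ := l
      cases e <;> simp [gpow, gfr]
    rw [ex, List.map_map]
    have : ((fun x => Sum.elim (Coprod.inl : C →* Monoid.Coprod C (FreeGroup I))
        (gpow fun i => Coprod.inr (FreeGroup.of i)) x) ∘ Sum.inr) =
        fun l : Letter I => (Coprod.inr : FreeGroup I →* _) (gfr l) := by
      funext l; exact h1 l
    rw [this]
    have key : ∀ L : List (Letter I), (List.map (fun l =>
        (Coprod.inr : FreeGroup I →* Monoid.Coprod C (FreeGroup I)) (gfr l)) L).prod =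
        Coprod.inr ((List.map gfr L).prod) := by
      intro L
      induction L with
      | nil => simp
      | cons x L ih => simp [ih]
    rw [key, prod_map_gfr, FreeGroup.mk_toWord]

theorem exists_rep (w : Monoid.Coprod C (FreeGroup I)) :
    ∃ (a : C) (L : List (Letter I × C)), List.Chain' Rr L ∧ toCop a L = w := by
  obtain ⟨fm, rfl⟩ := Coprod.mk_surjective (M := C) (N := FreeGroup I) w
  set A : List (C ⊕ Letter I) := (FreeMonoid.toList fm).flatMap ex with hA
  refine ⟨(A.foldl push (1, [])).1, (A.foldl push (1, [])).2,
    red_foldl A _ (by simp [List.Chain']), ?_⟩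
  show evF _ _ _ _ = _
  rw [evF_foldl]
  have h1 : evF (Coprod.inl : C →* _) (fun i => Coprod.inr (FreeGroup.of i))
      (1 : C) ([] : List (Letter I × C)) = 1 := by simp [evF]
  rw [h1, one_mul]
  have h2 : Coprod.mk fm = ((FreeMonoid.toList fm).map
      (fun s => Coprod.mk (FreeMonoid.of s))).prod := by
    have : (Coprod.mk : FreeMonoid (C ⊕ FreeGroup I) →* _) =
        FreeMonoid.lift (fun s => Coprod.mk (FreeMonoid.of s)) :=
      FreeMonoid.hom_eq (fun x => by rw [FreeMonoid.lift_eval_of])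
    conv_lhs => rw [this, FreeMonoid.lift_apply]
  rw [h2, hA]
  induction (FreeMonoid.toList fm) with
  | nil => simp
  | cons s t ih =>
    rw [List.flatMap_cons, List.map_append, List.prod_append, ih, List.map_cons,
      List.prod_cons, prod_ex]

end Rep

section Perm

variable {α : Type} [Fintype α] [DecidableEq α]

theorem extend_injOn (f : α → α) (s : Finset α) (hf : Set.InjOn f s) :
    ∃ π : Equiv.Perm α, ∀ x ∈ s, π x = f x := by
  classical
  induction s using Finset.induction_on with
  | empty => exact ⟨1, by simp⟩
  | @insert a s ha ih =>
    obtain ⟨π, hπ⟩ := ih (hf.mono (by simp [Set.subset_insert]))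
    refine ⟨π * Equiv.swap a (π⁻¹ (f a)), ?_⟩
    intro x hx
    rcases Finset.mem_insert.mp hx with rfl | hx'
    · simp [Equiv.Perm.mul_apply]
    · have hxa : x ≠ a := by rintro rfl; exact ha hx'
      have hxb : x ≠ π⁻¹ (f a) := by
        intro h
        have h2 : π x = f a := by rw [h]; simp
        rw [hπ x hx'] at h2
        exact hxa (hf (by simp [hx']) (by simp) h2)
      rw [Equiv.Perm.mul_apply, Equiv.swap_apply_of_ne_of_ne hxa hxb, hπ x hx']

/-- the constraints are a partial injection -/
def Good {I : Type} (cons : I → List (α × α)) : Prop :=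
  ∀ i, ∀ c ∈ cons i, ∀ c' ∈ cons i, (c.1 = c'.1 ∨ c.2 = c'.2) → c = c'

theorem exists_perm_sat {I : Type} (cons : I → List (α × α)) (hB : Good cons) :
    ∃ σ : I → Equiv.Perm α, ∀ i, ∀ c ∈ cons i, σ i c.1 = c.2 := by
  classical
  have key : ∀ i, ∃ π : Equiv.Perm α, ∀ c ∈ cons i, π c.1 = c.2 := by
    intro i
    set f : α → α := fun x =>
      if h : ∃ c, c ∈ cons i ∧ c.1 = x then (Classical.choose h).2 else x with hfdef
    have hfc : ∀ c ∈ cons i, f c.1 = c.2 := by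
      intro c hc
      have h : ∃ c', c' ∈ cons i ∧ c'.1 = c.1 := ⟨c, hc, rfl⟩
      rw [hfdef]
      simp only [dif_pos h]
      obtain ⟨hc', he⟩ := Classical.choose_spec h
      rw [hB i _ hc' c hc (Or.inl he)]
    set s : Finset α := (cons i).toFinset.image Prod.fst with hsdef
    have hinj : Set.InjOn f s := by
      intro x hx y hy hxy
      rw [hsdef] at hx hy
      simp only [Finset.coe_image, Set.mem_image, Finset.mem_coe,
        List.mem_toFinset] at hx hy
      obtain ⟨c, hc, rfl⟩ := hx
      obtain ⟨c', hc', rfl⟩ := hy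
      rw [hfc c hc, hfc c' hc'] at hxy
      exact congrArg Prod.fst (hB i c hc c' hc' (Or.inr hxy))
    obtain ⟨π, hπ⟩ := extend_injOn f s hinj
    refine ⟨π, fun c hc => ?_⟩
    rw [hπ c.1 (Finset.mem_image.mpr ⟨c, List.mem_toFinset.mpr hc, rfl⟩), hfc c hc]
  choose σ hσ using key
  exact ⟨σ, fun i c hc => hσ i c hc⟩

/-- `π` either is trivial or admits `Q` points that it moves; packaged as a selection
principle. -/
def MovesQ (Q : ℕ) (π : Equiv.Perm α) : Prop :=
  ∀ S : Finset α, 2 * S.card < Q → ∃ y, y ∉ S ∧ π y ∉ S ∧ (π ≠ 1 → π y ≠ y)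

theorem movesQ_of (Q : ℕ) (hQ : Q ≤ Fintype.card α) (π : Equiv.Perm α)
    (h : π = 1 ∨ ∃ f : Fin Q → α, Function.Injective f ∧ ∀ b, π (f b) ≠ f b) :
    MovesQ Q π := by
  intro S hS
  have hcard : S.card < Fintype.card α := by omega
  rcases h with rfl | ⟨f, hfinj, hfmv⟩
  · have : ∃ y, y ∉ S := by
      by_contra hco
      push_neg at hco
      have : S = Finset.univ := Finset.eq_univ_iff_forall.mpr hco
      rw [this, Finset.card_univ] at hcard
      omega
    obtain ⟨y, hy⟩ := this
    exact ⟨y, hy, hy, fun hne => absurd rfl hne⟩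
  · set T : Finset α := S ∪ S.image (⇑π⁻¹) with hT
    have hTcard : T.card < Q := by
      have h1 : T.card ≤ S.card + (S.image (⇑π⁻¹)).card := Finset.card_union_le _ _
      have h2 : (S.image (⇑π⁻¹)).card ≤ S.card := Finset.card_image_le
      omega
    have himg : (Finset.univ.image f).card = Q := by
      rw [Finset.card_image_of_injective _ hfinj, Finset.card_univ, Fintype.card_fin]
    have hns : ¬ (Finset.univ.image f ⊆ T) := by
      intro hsub
      have := Finset.card_le_card hsub
      omega
    obtain ⟨y, hymem, hyT⟩ := Finset.not_subset.mp hns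
    obtain ⟨b, _, rfl⟩ := Finset.mem_image.mp hymem
    refine ⟨f b, fun h => hyT (Finset.mem_union_left _ h), ?_, fun _ => hfmv b⟩
    intro hmem
    exact hyT (Finset.mem_union_right _ (Finset.mem_image.mpr
      ⟨π (f b), hmem, by simp⟩))

end Perm

section Main

variable {α : Type} [Fintype α] [DecidableEq α] {I : Type}

/-- the "next constant" of a (reversed) formal word -/
def ncst (π₀ : Equiv.Perm α) : List (Letter I × Equiv.Perm α) → Equiv.Perm α
  | [] => π₀
  | x :: _ => x.2

theorem main_induction (Q : ℕ) (π₀ : Equiv.Perm α) (hπ₀ : MovesQ Q π₀)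
    (L : List (Letter I × Equiv.Perm α)) :
    ∀ (cons : I → List (α × α)) (U : Finset α) (p y : α) (last : Option (Letter I)),
    (∀ x ∈ L, MovesQ Q x.2) →
    List.Chain' Rr L →
    (∀ l (π : Equiv.Perm α) L', L = (l, π) :: L' → ∀ l', last = some l' →
       l'.1 = l.1 → l.2 = !l'.2 → π ≠ 1) →
    p ∈ U → y ∈ U → ncst π₀ L y ∈ U →
    (ncst π₀ L ≠ 1 → ncst π₀ L y ≠ y) →
    (L = [] → ncst π₀ L y ≠ p) →
    2 * U.card + 4 * L.length + 4 ≤ Q →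
    (∀ i, ∀ c ∈ cons i, c.1 ∈ U ∧ c.2 ∈ U) →
    Good cons →
    (∀ i, ∀ c ∈ cons i, (c.1 = y → last = some (i, false)) ∧
      (c.2 = y → last = some (i, true))) →
    ((∀ i, ∀ c ∈ cons i, c.1 ≠ ncst π₀ L y ∧ c.2 ≠ ncst π₀ L y) ∨ ncst π₀ L y = y) →
    ∃ (cons' : I → List (α × α)) (z₀ : α),
      (∀ i, ∀ c ∈ cons i, c ∈ cons' i) ∧ Good cons' ∧ z₀ ≠ p ∧
      ∀ σ : I → Equiv.Perm α,
        (∀ i, ∀ c ∈ cons' i, σ i c.1 = c.2) →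
        evF (MonoidHom.id (Equiv.Perm α)) σ π₀ L y = z₀ := by
  classical
  induction L with
  | nil =>
    intro cons U p y last _ _ _ hpU hyU hzU hmv hzp hbud hA hB hD2 hD3
    exact ⟨cons, π₀ y, fun i c hc => hc, hB, hzp rfl, fun σ hσ => rfl⟩
  | cons x L' ih =>
    intro cons U p y last hmov hred hlast hpU hyU hzU hmv hzp hbud hA hB hD2 hD3
    obtain ⟨l, π⟩ := x
    have hzU' : (π y : α) ∈ U := hzU
    have hπ'moves : MovesQ Q (ncst π₀ L') := by
      cases L' with
      | nil => exact hπ₀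
      | cons x' L'' => exact hmov x' (List.mem_cons_of_mem _ List.mem_cons_self)
    obtain ⟨y', hy'U, hz'U, hy'mv⟩ := hπ'moves U (by simp only [List.length_cons] at hbud; omega)
    set U' : Finset α := insert y' (insert ((ncst π₀ L') y') U) with hU'
    have hy'U2 : y' ∈ U' := Finset.mem_insert_self _ _
    have hz'U2 : (ncst π₀ L') y' ∈ U' := Finset.mem_insert_of_mem (Finset.mem_insert_self _ _)
    have hUsub : U ⊆ U' := fun a ha =>
      Finset.mem_insert_of_mem (Finset.mem_insert_of_mem ha)
    have hzeqy : (π y : α) = y → π = 1 := by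
      intro h
      by_contra hne
      exact hmv (by simpa [ncst] using hne) (by simpa [ncst] using h)
    have hznotfst : l.2 = true → ∀ c ∈ cons l.1, c.1 ≠ π y := by
      intro he c hc hczz
      rcases hD3 with hD3' | hD3'
      · exact (hD3' l.1 c hc).1 hczz
      · have hzy : (π y : α) = y := hD3'
        have h2 := (hD2 l.1 c hc).1 (hczz.trans hzy)
        exact hlast l π L' rfl (l.1, false) h2 rfl (by simp [he]) (hzeqy hzy)
    have hznotsnd : l.2 = false → ∀ c ∈ cons l.1, c.2 ≠ π y := by
      intro he c hc hczz
      rcases hD3 with hD3' | hD3'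
      · exact (hD3' l.1 c hc).2 hczz
      · have hzy : (π y : α) = y := hD3'
        have h2 := (hD2 l.1 c hc).2 (hczz.trans hzy)
        exact hlast l π L' rfl (l.1, true) h2 rfl (by simp [he]) (hzeqy hzy)
    -- the new constraint, with all its properties bundled
    obtain ⟨C, hgz, hCold1, hCold2, hD2C1, hD2C2, hCU1, hCU2, hD3C⟩ :
        ∃ C : α × α,
          (∀ σ : I → Equiv.Perm α, σ l.1 C.1 = C.2 → gpow σ l (π y) = y') ∧
          (∀ c ∈ cons l.1, C.1 ≠ c.1) ∧
          (∀ c ∈ cons l.1, C.2 ≠ c.2) ∧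
          (C.1 = y' → l = (l.1, false)) ∧
          (C.2 = y' → l = (l.1, true)) ∧
          C.1 ∈ U' ∧ C.2 ∈ U' ∧
          ((ncst π₀ L') y' ≠ y' → C.1 ≠ (ncst π₀ L') y' ∧ C.2 ≠ (ncst π₀ L') y') := by
      cases hl2 : l.2
      · refine ⟨(y', π y), ?_, ?_, ?_, ?_, ?_, hy'U2, hUsub hzU', ?_⟩
        · intro σ hσ
          have hσ' : σ l.1 y' = π y := hσ
          rw [gpow, hl2, if_neg (by simp), ← hσ', Equiv.Perm.coe_inv, Equiv.symm_apply_apply]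
        · intro c hc h
          have h' : y' = c.1 := h
          exact hy'U (by rw [h']; exact (hA l.1 c hc).1)
        · intro c hc h
          exact (hznotsnd hl2 c hc) h.symm
        · intro _
          exact Prod.ext rfl hl2
        · intro h
          have h' : (π y : α) = y' := h
          rw [h'] at hzU'
          exact absurd hzU' hy'U
        · intro hne
          refine ⟨fun h => hne h.symm, fun h => hz'U ?_⟩
          have h' : (π y : α) = (ncst π₀ L') y' := h
          rw [← h']
          exact hzU'
      · refine ⟨(π y, y'), ?_, ?_, ?_, ?_, ?_, hUsub hzU', hy'U2, ?_⟩
        · intro σ hσ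
          have hσ' : σ l.1 (π y) = y' := hσ
          rw [gpow, hl2, if_pos rfl]
          exact hσ'
        · intro c hc h
          exact (hznotfst hl2 c hc) h.symm
        · intro c hc h
          have h' : y' = c.2 := h
          exact hy'U (by rw [h']; exact (hA l.1 c hc).2)
        · intro h
          have h' : (π y : α) = y' := h
          rw [h'] at hzU'
          exact absurd hzU' hy'U
        · intro _
          exact Prod.ext rfl hl2
        · intro hne
          refine ⟨fun h => hz'U ?_, fun h => hne h.symm⟩
          have h' : (π y : α) = (ncst π₀ L') y' := h
          rw [← h']
          exact hzU'
    classical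
    set cons'' : I → List (α × α) := fun i => if i = l.1 then C :: cons i else cons i
      with hcons''
    have hmm : ∀ i c, c ∈ cons'' i ↔ (i = l.1 ∧ c = C) ∨ c ∈ cons i := by
      intro i c
      rw [hcons'']
      by_cases h : i = l.1
      · subst h
        simp [List.mem_cons]
      · simp [if_neg h, h]
    have hCmem : C ∈ cons'' l.1 := (hmm l.1 C).mpr (Or.inl ⟨rfl, rfl⟩)
    have hcall := ih cons'' U' p y' (some l)
      (fun x hx => hmov x (List.mem_cons_of_mem _ hx))
      (List.isChain_cons.mp hred).2
      ?hlast' (hUsub hpU) hy'U2 hz'U2 hy'mv ?hzp' ?hbud' ?hA' ?hGood' ?hD2' ?hD3'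
    case hlast' =>
      intro l'' π'' L'' hL' l0 hl0 h1 h2
      cases hl0
      rw [hL'] at hred
      exact (List.isChain_cons_cons.mp hred).1 ⟨h1, h2⟩
    case hzp' =>
      intro _ h
      exact hz'U (by rw [h]; exact hpU)
    case hbud' =>
      have h1 : U'.card ≤ U.card + 2 := by
        calc U'.card ≤ (insert ((ncst π₀ L') y') U).card + 1 := Finset.card_insert_le _ _
        _ ≤ U.card + 2 := by
            have := Finset.card_insert_le ((ncst π₀ L') y') U
            omega
      simp only [List.length_cons] at hbud
      omega
    case hA' =>
      intro i c hc
      rcases (hmm i c).mp hc with ⟨rfl, rfl⟩ | hc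
      · exact ⟨hCU1, hCU2⟩
      · exact ⟨hUsub (hA i c hc).1, hUsub (hA i c hc).2⟩
    case hGood' =>
      intro i c hc c' hc' hshare
      rcases (hmm i c).mp hc with ⟨hi, rfl⟩ | hc2 <;>
        rcases (hmm i c').mp hc' with ⟨hi', rfl⟩ | hc2'
      · rfl
      · subst hi
        rcases hshare with h | h
        · exact absurd h (hCold1 c' hc2')
        · exact absurd h (hCold2 c' hc2')
      · subst hi'
        rcases hshare with h | h
        · exact absurd h.symm (hCold1 c hc2)
        · exact absurd h.symm (hCold2 c hc2)
      · exact hB i c hc2 c' hc2' hshare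
    case hD2' =>
      intro i c hc
      rcases (hmm i c).mp hc with ⟨rfl, rfl⟩ | hc
      · exact ⟨fun h => by rw [hD2C1 h], fun h => by rw [hD2C2 h]⟩
      · exact ⟨fun h => absurd (hA i c hc).1 (by rw [h]; exact hy'U),
          fun h => absurd (hA i c hc).2 (by rw [h]; exact hy'U)⟩
    case hD3' =>
      by_cases hzy' : ((ncst π₀ L') y' : α) = y'
      · exact Or.inr hzy'
      · left
        intro i c hc
        rcases (hmm i c).mp hc with ⟨rfl, rfl⟩ | hc
        · exact hD3C hzy'
        · exact ⟨fun h => hz'U (by rw [← h]; exact (hA i c hc).1),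
            fun h => hz'U (by rw [← h]; exact (hA i c hc).2)⟩
    obtain ⟨cons₂, z₀, hext₂, hgood₂, hz₀p, heval₂⟩ := hcall
    refine ⟨cons₂, z₀, ?_, hgood₂, hz₀p, ?_⟩
    · intro i c hc
      exact hext₂ i c ((hmm i c).mpr (Or.inr hc))
    intro σ hσ
    have hCsat : σ l.1 C.1 = C.2 := hσ l.1 C (hext₂ l.1 C hCmem)
    show (evF (MonoidHom.id (Equiv.Perm α)) σ π₀ L' * gpow σ l *
      (MonoidHom.id (Equiv.Perm α)) π) y = z₀
    rw [Equiv.Perm.mul_apply, Equiv.Perm.mul_apply]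
    have hstep : gpow σ l ((MonoidHom.id (Equiv.Perm α)) π y) = y' := hgz σ hCsat
    rw [hstep]
    exact heval₂ σ hσ

theorem map_evF {C H H2 : Type*} [Group C] [Group H] [Group H2] (φ : H →* H2)
    (inc : C →* H) (σ : I → H) (a : C) (L : List (Letter I × C)) :
    φ (evF inc σ a L) = evF (φ.comp inc) (fun i => φ (σ i)) a L := by
  induction L with
  | nil => rfl
  | cons x L ih =>
    show φ (evF inc σ a L * gpow σ x.1 * inc x.2) = _
    rw [map_mul, map_mul, ih]
    have : φ (gpow σ x.1) = gpow (fun i => φ (σ i)) x.1 := by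
      rw [gpow, gpow]
      cases x.1.2 <;> simp
    rw [this]
    rfl

theorem evF_mapconst {C C' H : Type*} [Group C] [Group C'] [Group H] (f : C →* C')
    (inc : C' →* H) (σ : I → H) (a : C) (L : List (Letter I × C)) :
    evF (inc.comp f) σ a L = evF inc σ (f a) (L.map fun x => (x.1, f x.2)) := by
  induction L with
  | nil => rfl
  | cons x L ih =>
    show evF (inc.comp f) σ a L * gpow σ x.1 * inc (f x.2) = _
    rw [ih]
    rfl

end Main

section Scale

variable (n : ℕ → ℕ) (hpos : ∀ k, 0 < n k) (hmono : StrictMono n)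
    (hdvd : ∀ k, n k ∣ n (k + 1))
    (G : Type) [Group G]
    (ψ : ∀ k, Equiv.Perm (Fin (n k)) →* G)
    (hcompat : ∀ k (g : Equiv.Perm (Fin (n k))),
      ∃ g' : Equiv.Perm (Fin (n (k + 1))),
        (∀ x : Fin (n (k + 1)), (g' x : ℕ) =
          ((x : ℕ) / n k) * n k + (g ⟨(x : ℕ) % n k, Nat.mod_lt _ (hpos k)⟩ : ℕ)) ∧
        ψ (k + 1) g' = ψ k g)

include hpos hmono hdvd hcompat

theorem dvd_of_le {k k' : ℕ} (h : k ≤ k') : n k ∣ n k' := by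
  induction k' with
  | zero => cases Nat.le_zero.mp h; rfl
  | succ k' ih =>
    rcases Nat.lt_or_ge k (k' + 1) with h' | h'
    · exact dvd_trans (ih (Nat.lt_succ_iff.mp h')) (hdvd k')
    · have : k = k' + 1 := le_antisymm h h'
      rw [this]

theorem pow_le_q (K t : ℕ) : ∃ q, n (K + t) = q * n K ∧ 2 ^ t ≤ q := by
  induction t with
  | zero => exact ⟨1, by simp, by simp⟩
  | succ t ih =>
    obtain ⟨q, hq, h2⟩ := ih
    obtain ⟨c, hc⟩ := hdvd (K + t)
    have hlt : n (K + t) < n (K + t + 1) := hmono (Nat.lt_succ_self _)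
    have hc2 : 2 ≤ c := by
      rcases Nat.lt_or_ge c 2 with h | h
      · interval_cases c
        · simp at hc; have := hpos (K + t + 1); omega
        · simp at hc; omega
      · exact h
    refine ⟨c * q, ?_, ?_⟩
    · rw [show K + (t + 1) = K + t + 1 from rfl, hc, hq]
      ring
    · calc 2 ^ (t + 1) = 2 * 2 ^ t := by ring
      _ ≤ c * q := Nat.mul_le_mul hc2 h2

theorem range_mono {k k' : ℕ} (h : k ≤ k') (x : G) (hx : ∃ g, ψ k g = x) :
    ∃ g', ψ k' g' = x := by
  induction k' with
  | zero => cases Nat.le_zero.mp h; exact hx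
  | succ k' ih =>
    rcases Nat.lt_or_ge k (k' + 1) with h' | h'
    · obtain ⟨g, hg⟩ := ih (Nat.lt_succ_iff.mp h')
      obtain ⟨g', _, hg'⟩ := hcompat k' g
      exact ⟨g', by rw [hg', hg]⟩
    · have : k = k' + 1 := le_antisymm h h'
      subst this
      exact hx

theorem exists_level (hexhaust : ∀ x : G, ∃ k, ∃ g : Equiv.Perm (Fin (n k)), ψ k g = x)
    (lst : List G) : ∃ K, ∀ a ∈ lst, ∃ c, ψ K c = a := by
  induction lst with
  | nil => exact ⟨0, by simp⟩
  | cons a lst ih =>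
    obtain ⟨K1, h1⟩ := ih
    obtain ⟨k, g, hg⟩ := hexhaust a
    refine ⟨max K1 k, ?_⟩
    intro b hb
    rcases List.mem_cons.mp hb with rfl | hb
    · exact range_mono n hpos hmono hdvd G ψ hcompat (le_max_right _ _) b ⟨g, hg⟩
    · exact range_mono n hpos hmono hdvd G ψ hcompat (le_max_left _ _) b (h1 b hb)

/-- iterated diagonal lift -/
noncomputable def liftP (K : ℕ) : ∀ t, Equiv.Perm (Fin (n K)) → Equiv.Perm (Fin (n (K + t)))
  | 0, g => g
  | t + 1, g => (hcompat (K + t) (liftP K t g)).choose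

theorem liftP_psi (K t : ℕ) (g : Equiv.Perm (Fin (n K))) :
    ψ (K + t) (liftP n hpos G ψ hcompat K t g) = ψ K g := by
  induction t with
  | zero => rfl
  | succ t ih =>
    show ψ (K + t + 1) (hcompat (K + t) (liftP n hpos G ψ hcompat K t g)).choose = ψ K g
    rw [(hcompat (K + t) (liftP n hpos G ψ hcompat K t g)).choose_spec.2, ih]

theorem liftP_moves (K t : ℕ) (g : Equiv.Perm (Fin (n K))) (i0 : Fin (n K))
    (hi0 : g i0 ≠ i0) :
    ∀ x : Fin (n (K + t)), (x : ℕ) % n K = (i0 : ℕ) →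
      liftP n hpos G ψ hcompat K t g x ≠ x := by
  induction t with
  | zero =>
    intro x hx
    have h1 : (x : ℕ) < n K := x.isLt
    have hxval : (x : ℕ) = (i0 : ℕ) := by rw [← hx, Nat.mod_eq_of_lt h1]
    have hxe : x = i0 := Fin.ext hxval
    subst hxe
    exact hi0
  | succ t ih =>
    intro x hx
    intro hfix
    have hspec := (hcompat (K + t) (liftP n hpos G ψ hcompat K t g)).choose_spec.1 x
    have hvals : (((hcompat (K + t) (liftP n hpos G ψ hcompat K t g)).choose x : Fin _) : ℕ)
        = (x : ℕ) := congrArg Fin.val hfix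
    have heq := hspec.symm.trans hvals
    set r : Fin (n (K + t)) := ⟨(x : ℕ) % n (K + t), Nat.mod_lt _ (hpos (K + t))⟩ with hr
    have hrmod : (r : ℕ) % n K = (i0 : ℕ) := by
      show ((x : ℕ) % n (K + t)) % n K = (i0 : ℕ)
      rw [Nat.mod_mod_of_dvd _ (dvd_of_le n hpos hmono hdvd G ψ hcompat (Nat.le_add_right K t)),
        hx]
    have hrne := ih r hrmod
    have hrne' : ((liftP n hpos G ψ hcompat K t g r : Fin _) : ℕ) ≠ (r : ℕ) :=
      fun hcon => hrne (Fin.ext hcon)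
    have hdm := Nat.div_add_mod (x : ℕ) (n (K + t))
    have hrval : (r : ℕ) = (x : ℕ) % n (K + t) := rfl
    rw [Nat.mul_comm ((x : ℕ) / n (K + t)) (n (K + t))] at heq
    have hcan := heq.trans hdm.symm
    have hA := Nat.add_left_cancel hcan
    exact hrne' (hA.trans hrval.symm)

end Scale

end Stmt11

/-- for any scale `(n_k)`, the direct limit `G` of the symmetric groups
`Sym({0,…,n_k−1})` under the block-diagonal embeddings
`φ_k(g)(j·n_k + i) = j·n_k + g(i)` is mixed identity free: for every `n ≥ 1` and every
word `w ∈ (G ∗ F_n) \ G`, there are `g_1,…,g_n ∈ G` with `w(g_1,…,g_n) ≠ 1`.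

The direct limit is presented abstractly: `G` is a group with compatible injective
homomorphisms `ψ k : Sym(Fin (n k)) →* G` whose images exhaust `G`, where compatibility
is along the block-diagonal embeddings. -/
theorem stmt_11 (n : ℕ → ℕ) (hpos : ∀ k, 0 < n k) (hmono : StrictMono n)
    (hdvd : ∀ k, n k ∣ n (k + 1))
    (G : Type) [Group G]
    (ψ : ∀ k, Equiv.Perm (Fin (n k)) →* G)
    (hinj : ∀ k, Function.Injective (ψ k))
    (hcompat : ∀ k (g : Equiv.Perm (Fin (n k))),
      ∃ g' : Equiv.Perm (Fin (n (k + 1))),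
        (∀ x : Fin (n (k + 1)), (g' x : ℕ) =
          ((x : ℕ) / n k) * n k + (g ⟨(x : ℕ) % n k, Nat.mod_lt _ (hpos k)⟩ : ℕ)) ∧
        ψ (k + 1) g' = ψ k g)
    (hexhaust : ∀ x : G, ∃ k, ∃ g : Equiv.Perm (Fin (n k)), ψ k g = x) :
    -- `G` is mixed identity free:
    ∀ N : ℕ, 1 ≤ N →
      ∀ w : Monoid.Coprod G (FreeGroup (Fin N)),
        w ∉ Set.range (Monoid.Coprod.inl : G →* Monoid.Coprod G (FreeGroup (Fin N))) →
        ∃ g : Fin N → G,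
          Monoid.Coprod.lift (MonoidHom.id G) (FreeGroup.lift g) w ≠ 1 := by
  classical
  intro N _ w hw
  obtain ⟨a₀, L, hred, hrep⟩ := Stmt11.exists_rep (I := Fin N) (C := G) w
  by_cases hL : L = []
  · subst hL
    exact absurd ⟨a₀, hrep⟩ hw
  set m := L.length with hm
  set Q := 4 * m + 8 with hQdef
  obtain ⟨K, hK⟩ := Stmt11.exists_level n hpos hmono hdvd G ψ hcompat hexhaust
    (a₀ :: L.map Prod.snd)
  set t := Q with ht
  obtain ⟨q, hq, hq2⟩ := Stmt11.pow_le_q n hpos hmono hdvd G ψ hcompat K t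
  set M := K + t with hM
  have hQq : Q ≤ q := le_trans (Nat.le_of_lt (Nat.lt_two_pow_self (n := Q))) hq2
  have hQle : Q ≤ Fintype.card (Fin (n M)) := by
    rw [Fintype.card_fin, hq]
    have h1 : 1 ≤ n K := hpos K
    calc Q ≤ q := hQq
    _ = q * 1 := (Nat.mul_one q).symm
    _ ≤ q * n K := Nat.mul_le_mul_left q h1
  -- lifting a single constant to level M
  have hconstlift : ∀ a : G, (∃ c, ψ K c = a) →
      ∃ π : Equiv.Perm (Fin (n M)), ψ M π = a ∧ Stmt11.MovesQ Q π := by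
    rintro a ⟨c, rfl⟩
    by_cases hc : c = 1
    · subst hc
      exact ⟨1, by simp, Stmt11.movesQ_of Q hQle 1 (Or.inl rfl)⟩
    · refine ⟨Stmt11.liftP n hpos G ψ hcompat K t c,
        Stmt11.liftP_psi n hpos hmono hdvd G ψ hcompat K t c, ?_⟩
      have hex : ∃ i0 : Fin (n K), c i0 ≠ i0 := by
        by_contra hco
        push_neg at hco
        exact hc (Equiv.ext fun i => hco i)
      obtain ⟨i0, hi0⟩ := hex
      have hbd : ∀ b : Fin Q, (b : ℕ) * n K + (i0 : ℕ) < n M := by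
        intro b
        calc (b : ℕ) * n K + (i0 : ℕ) < (b : ℕ) * n K + n K := by
              have := i0.isLt; omega
        _ = ((b : ℕ) + 1) * n K := by ring
        _ ≤ Q * n K := Nat.mul_le_mul_right _ (by have := b.isLt; omega)
        _ ≤ q * n K := Nat.mul_le_mul_right _ hQq
        _ = n M := hq.symm
      refine Stmt11.movesQ_of Q hQle _
        (Or.inr ⟨fun b => ⟨(b : ℕ) * n K + (i0 : ℕ), hbd b⟩, ?_, ?_⟩)
      · intro b b' hbb
        have hv := congrArg Fin.val hbb
        simp only at hv
        have h2 : (b : ℕ) * n K = (b' : ℕ) * n K := by omega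
        have h3 : (b : ℕ) = (b' : ℕ) :=
          Nat.eq_of_mul_eq_mul_right (hpos K) h2
        exact Fin.ext h3
      · intro b
        apply Stmt11.liftP_moves n hpos hmono hdvd G ψ hcompat K t c i0 hi0
        show ((b : ℕ) * n K + (i0 : ℕ)) % n K = (i0 : ℕ)
        rw [Nat.add_comm ((b : ℕ) * n K) (i0 : ℕ), Nat.add_mul_mod_self_right, Nat.mod_eq_of_lt i0.isLt]
  obtain ⟨π₀, hπ₀ψ, hπ₀m⟩ := hconstlift a₀ (hK a₀ List.mem_cons_self)
  -- lifting the word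
  have hlift : ∀ L₂ : List (Stmt11.Letter (Fin N) × G), (∀ a ∈ L₂, ∃ c, ψ K c = a.2) →
      ∃ Lp : List (Stmt11.Letter (Fin N) × Equiv.Perm (Fin (n M))),
        Lp.map (fun x => (x.1, ψ M x.2)) = L₂ ∧ ∀ x ∈ Lp, Stmt11.MovesQ Q x.2 := by
    intro L₂ hL₂
    induction L₂ with
    | nil => exact ⟨[], rfl, by simp⟩
    | cons x L₂ ih =>
      obtain ⟨Lp, h1, h2⟩ := ih (fun a ha => hL₂ a (List.mem_cons_of_mem _ ha))
      obtain ⟨π, hπ1, hπ2⟩ := hconstlift x.2 (hL₂ x List.mem_cons_self)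
      refine ⟨(x.1, π) :: Lp, ?_, ?_⟩
      · rw [List.map_cons, h1, hπ1]
      · intro y hy
        rcases List.mem_cons.mp hy with rfl | hy
        · exact hπ2
        · exact h2 y hy
  obtain ⟨Lp, hLpmap, hLpmv⟩ := hlift L
    (fun a ha => hK a.2 (List.mem_cons_of_mem _ (List.mem_map_of_mem ha)))
  have hLpne : Lp ≠ [] := by
    intro h
    rw [h] at hLpmap
    exact hL hLpmap.symm
  have hlen : Lp.length = m := by
    rw [← hLpmap, List.length_map] at hm
    exact hm.symm
  have hredp : Lp.Chain' Stmt11.Rr := by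
    rw [← hLpmap, List.Chain', List.isChain_map] at hred
    refine hred.imp ?_
    intro a b hab hpat hb1
    refine hab hpat ?_
    rw [hb1, map_one]
  have hncmov : Stmt11.MovesQ Q (Stmt11.ncst π₀ Lp) := by
    cases hLp : Lp with
    | nil => exact absurd hLp hLpne
    | cons x Lp' =>
      rw [Stmt11.ncst]
      exact hLpmv x (by rw [hLp]; exact List.mem_cons_self)
  obtain ⟨p, hp1, hp2, hp3⟩ := hncmov ∅ (by simp [hQdef]; omega)
  set U₀ : Finset (Fin (n M)) := {p, (Stmt11.ncst π₀ Lp) p} with hU₀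
  have hU₀card : U₀.card ≤ 2 := by
    rw [hU₀]
    calc ({p, (Stmt11.ncst π₀ Lp) p} : Finset (Fin (n M))).card
        ≤ ({(Stmt11.ncst π₀ Lp) p} : Finset (Fin (n M))).card + 1 := Finset.card_insert_le _ _
    _ ≤ 2 := by rw [Finset.card_singleton]
  have hcall := Stmt11.main_induction Q π₀ hπ₀m Lp (fun _ => []) U₀ p p none
    hLpmv hredp (fun l π L' hL' l' hl' => by simp at hl')
    (by rw [hU₀]; exact Finset.mem_insert_self _ _)
    (by rw [hU₀]; exact Finset.mem_insert_self _ _)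
    (by rw [hU₀]; exact Finset.mem_insert_of_mem (Finset.mem_singleton_self _))
    hp3 (fun h => absurd h hLpne)
    (by rw [hlen]; omega)
    (fun i c hc => absurd hc List.not_mem_nil)
    (fun i c hc => absurd hc List.not_mem_nil)
    (fun i c hc => absurd hc List.not_mem_nil)
    (Or.inl (fun i c hc => absurd hc List.not_mem_nil))
  obtain ⟨cons', z₀, _, hgood', hz₀p, heval⟩ := hcall
  obtain ⟨σ, hσ⟩ := Stmt11.exists_perm_sat cons' hgood'
  have hEp := heval σ hσ
  set g : Fin N → G := fun i => ψ M (σ i) with hg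
  refine ⟨g, ?_⟩
  intro hcon
  -- rewrite the evaluation
  set Φ : Monoid.Coprod G (FreeGroup (Fin N)) →* G :=
    Monoid.Coprod.lift (MonoidHom.id G) (FreeGroup.lift g) with hΦ
  have h1 : Φ w = Stmt11.evF (MonoidHom.id G) g a₀ L := by
    rw [← hrep]
    show Φ (Stmt11.evF Monoid.Coprod.inl (fun i => Monoid.Coprod.inr (FreeGroup.of i)) a₀ L) = _
    rw [Stmt11.map_evF]
    have e1 : Φ.comp Monoid.Coprod.inl = MonoidHom.id G := Monoid.Coprod.lift_comp_inl _ _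
    have e2 : (fun i => Φ (Monoid.Coprod.inr (FreeGroup.of i))) = g := by
      funext i
      rw [hΦ, Monoid.Coprod.lift_apply_inr, FreeGroup.lift_apply_of]
    rw [e1, e2]
  have h2 : ψ M (Stmt11.evF (MonoidHom.id (Equiv.Perm (Fin (n M)))) σ π₀ Lp) =
      Stmt11.evF (MonoidHom.id G) g a₀ L := by
    have hmap := Stmt11.map_evF (ψ M) (MonoidHom.id (Equiv.Perm (Fin (n M)))) σ π₀ Lp
    rw [MonoidHom.comp_id] at hmap
    have hmc := Stmt11.evF_mapconst (ψ M) (MonoidHom.id G) (fun i => ψ M (σ i)) π₀ Lp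
    rw [MonoidHom.id_comp] at hmc
    rw [hmap, hmc, hLpmap, hπ₀ψ]
  have h3 : ψ M (Stmt11.evF (MonoidHom.id (Equiv.Perm (Fin (n M)))) σ π₀ Lp) = 1 := by
    rw [h2, ← h1, hcon]
  have h4 : Stmt11.evF (MonoidHom.id (Equiv.Perm (Fin (n M)))) σ π₀ Lp = 1 := by
    apply hinj M
    rw [h3, map_one]
  rw [h4] at hEp
  exact hz₀p ((Equiv.Perm.one_apply p).symm.trans hEp).symm
end

section
/- For any scale (n_k) with n_1 > 3 achievable (i.e., some n_k > 3) and 𝔫 = lcm(n_k), the direct limit group G_𝔫 of symmetric groups under block-diagonal embeddings contains two isomorphic finite cyclic subgroups F_1 and F_2 of the same order that are not conjugate in G_𝔫; consequently G_𝔫 is not isomorphic to Hall's universal locally finite group ℍ. -/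
/-- for a scale `(n_k)` with some `n_k > 3`, the direct limit `G` of the
symmetric groups under block-diagonal embeddings contains two isomorphic finite cyclic
subgroups of the same order which are not conjugate in `G`; consequently `G` fails
Hall's defining property (any isomorphism of finite subgroups is implemented by
conjugation), so `G` is not isomorphic to Hall's universal locally finite group. -/
theorem stmt_12 (n : ℕ → ℕ) (hpos : ∀ k, 0 < n k) (hmono : StrictMono n)
    (hdvd : ∀ k, n k ∣ n (k + 1)) (hbig : ∃ k, 3 < n k)
    (G : Type) [Group G]
    (ψ : ∀ k, Equiv.Perm (Fin (n k)) →* G)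
    (hinj : ∀ k, Function.Injective (ψ k))
    (hcompat : ∀ k (g : Equiv.Perm (Fin (n k))),
      ∃ g' : Equiv.Perm (Fin (n (k + 1))),
        (∀ x : Fin (n (k + 1)), (g' x : ℕ) =
          ((x : ℕ) / n k) * n k + (g ⟨(x : ℕ) % n k, Nat.mod_lt _ (hpos k)⟩ : ℕ)) ∧
        ψ (k + 1) g' = ψ k g)
    (hexhaust : ∀ x : G, ∃ k, ∃ g : Equiv.Perm (Fin (n k)), ψ k g = x) :
    (∃ F₁ F₂ : Subgroup G,
      (F₁ : Set G).Finite ∧ (F₂ : Set G).Finite ∧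
      IsCyclic F₁ ∧ IsCyclic F₂ ∧ Nat.card F₁ = Nat.card F₂ ∧
      Nonempty (F₁ ≃* F₂) ∧
      ∀ r : G, (fun x => r⁻¹ * x * r) '' (F₁ : Set G) ≠ (F₂ : Set G)) ∧
    ¬ (∀ (F₁ F₂ : Subgroup G), (F₁ : Set G).Finite → (F₂ : Set G).Finite →
        ∀ θ : F₁ ≃* F₂, ∃ g : G, ∀ x : F₁, (θ x : G) = g⁻¹ * (x : G) * g) := by
  classical
  -- one-step lift preserving fixed-point data
  have step : ∀ k (σ : Equiv.Perm (Fin (n k))), ∃ τ : Equiv.Perm (Fin (n (k+1))),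
      ψ (k+1) τ = ψ k σ ∧ ((∀ i, σ i ≠ i) → ∀ i, τ i ≠ i) ∧
      ((∃ i, σ i = i) → ∃ i, τ i = i) := by
    intro k σ
    obtain ⟨τ, hcoord, hψ⟩ := hcompat k σ
    refine ⟨τ, hψ, ?_, ?_⟩
    · intro hσ i hi
      have h1 := hcoord i
      rw [hi] at h1
      have h2 : (i : ℕ) / n k * n k + (i : ℕ) % n k = (i : ℕ) := Nat.div_add_mod' _ _
      have h3 : (σ ⟨(i : ℕ) % n k, Nat.mod_lt _ (hpos k)⟩ : ℕ) = (i : ℕ) % n k := by omega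
      exact hσ ⟨(i : ℕ) % n k, Nat.mod_lt _ (hpos k)⟩ (Fin.ext h3)
    · rintro ⟨i, hi⟩
      have hlt : n k < n (k+1) := hmono (Nat.lt_succ_self k)
      refine ⟨⟨(i : ℕ), lt_trans i.isLt hlt⟩, Fin.ext ?_⟩
      rw [hcoord ⟨(i : ℕ), lt_trans i.isLt hlt⟩]
      have hmod : ((⟨(i : ℕ), lt_trans i.isLt hlt⟩ : Fin (n (k+1))) : ℕ) % n k = (i : ℕ) :=
        Nat.mod_eq_of_lt i.isLt
      have hdiv : ((⟨(i : ℕ), lt_trans i.isLt hlt⟩ : Fin (n (k+1))) : ℕ) / n k = 0 :=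
        Nat.div_eq_of_lt i.isLt
      have harg : (⟨((⟨(i : ℕ), lt_trans i.isLt hlt⟩ : Fin (n (k+1))) : ℕ) % n k,
          Nat.mod_lt _ (hpos k)⟩ : Fin (n k)) = i := Fin.ext hmod
      rw [harg, hdiv, hi]
      simp
  -- multi-step lift
  have up : ∀ (k M : ℕ), k ≤ M → ∀ σ : Equiv.Perm (Fin (n k)),
      ∃ τ : Equiv.Perm (Fin (n M)),
      ψ M τ = ψ k σ ∧ ((∀ i, σ i ≠ i) → ∀ i, τ i ≠ i) ∧
      ((∃ i, σ i = i) → ∃ i, τ i = i) := by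
    intro k M hkM σ
    obtain ⟨j, rfl⟩ := Nat.le.dest hkM
    clear hkM
    induction j with
    | zero => exact ⟨σ, rfl, fun h => h, fun h => h⟩
    | succ j ih =>
      obtain ⟨τ, h1, h2, h3⟩ := ih
      obtain ⟨τ', h1', h2', h3'⟩ := step (k+j) τ
      exact ⟨τ', by show ψ (k + j + 1) τ' = ψ k σ; rw [h1', h1],
        fun h => h2' (h2 h), fun h => h3' (h3 h)⟩
  obtain ⟨k, hk⟩ := hbig
  haveI : NeZero (n k) := ⟨(hpos k).ne'⟩
  -- the full cycle at level k
  set c : Equiv.Perm (Fin (n k)) := Equiv.addLeft (1 : Fin (n k)) with hc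
  have hcfpf : ∀ i, c i ≠ i := by
    intro i hi
    have : (1 : Fin (n k)) + i = (0 : Fin (n k)) + i := by
      simp only [hc, Equiv.coe_addLeft] at hi; rw [hi, zero_add]
    have h10 : (1 : Fin (n k)) = 0 := add_right_cancel this
    have hv : ((1 : Fin (n k)) : ℕ) = ((0 : Fin (n k)) : ℕ) := congrArg Fin.val h10
    rw [Fin.val_one' _, Fin.val_zero _, Nat.mod_eq_of_lt (by omega)] at hv
    exact one_ne_zero hv
  -- the cycle-on-first-block at level k+1
  have hlt : n k < n (k+1) := hmono (Nat.lt_succ_self k)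
  set p : Fin (n (k+1)) → Prop := fun x => (x : ℕ) < n k with hp
  have e : Fin (n k) ≃ Subtype p :=
    { toFun := fun i => ⟨⟨(i : ℕ), lt_trans i.isLt hlt⟩, i.isLt⟩
      invFun := fun x => ⟨(x.1 : ℕ), x.2⟩
      left_inv := fun i => rfl
      right_inv := fun x => rfl }
  set c' : Equiv.Perm (Fin (n (k+1))) := Equiv.Perm.extendDomainHom e c with hc'
  set p0 : Fin (n (k+1)) := ⟨n k, hlt⟩ with hp0
  have hfix : c' p0 = p0 := by
    apply Equiv.Perm.extendDomain_apply_not_subtype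
    exact lt_irrefl (n k)
  have hordc' : orderOf c' = orderOf c :=
    orderOf_injective _ (Equiv.Perm.extendDomainHom_injective e) c
  set x₁ : G := ψ k c with hx₁
  set x₂ : G := ψ (k+1) c' with hx₂
  have hord₁ : orderOf x₁ = orderOf c := orderOf_injective _ (hinj k) c
  have hord₂ : orderOf x₂ = orderOf c := by
    rw [hx₂, orderOf_injective _ (hinj (k+1)) c', hordc']
  have hfin₁ : IsOfFinOrder x₁ := by
    rw [← orderOf_pos_iff, hord₁]; exact orderOf_pos c
  have hfin₂ : IsOfFinOrder x₂ := by
    rw [← orderOf_pos_iff, hord₂]; exact orderOf_pos c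
  set F₁ : Subgroup G := Subgroup.zpowers x₁ with hF₁
  set F₂ : Subgroup G := Subgroup.zpowers x₂ with hF₂
  -- cyclicity of zpowers
  have cyc : ∀ x : G, IsCyclic (Subgroup.zpowers x) := by
    intro x
    have hsurj : Function.Surjective
        ((zpowersHom G x).codRestrict (Subgroup.zpowers x)
          (fun z => by simpa using Subgroup.zpow_mem _ (Subgroup.mem_zpowers x) _)) := by
      rintro ⟨y, hy⟩
      obtain ⟨z, hz⟩ := Subgroup.mem_zpowers_iff.mp hy
      exact ⟨Multiplicative.ofAdd z, Subtype.ext (by exact hz)⟩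
    exact isCyclic_of_surjective _ hsurj
  have hcyc₁ : IsCyclic F₁ := cyc x₁
  have hcyc₂ : IsCyclic F₂ := cyc x₂
  have hcard : Nat.card F₁ = Nat.card F₂ := by
    rw [hF₁, hF₂, Nat.card_zpowers, Nat.card_zpowers, hord₁, hord₂]
  -- non-conjugacy
  have hncj : ∀ r : G, (fun x => r⁻¹ * x * r) '' (F₁ : Set G) ≠ (F₂ : Set G) := by
    intro r hr
    have hmem : r⁻¹ * x₁ * r ∈ (F₂ : Set G) := by
      rw [← hr]; exact ⟨x₁, Subgroup.mem_zpowers x₁, rfl⟩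
    obtain ⟨z, hz⟩ := Subgroup.mem_zpowers_iff.mp hmem
    obtain ⟨m, g, hg⟩ := hexhaust r
    set M := m + k + 1 with hM
    obtain ⟨τc, hτc1, hτc2, -⟩ := up k M (by omega) c
    obtain ⟨τ2, hτ21, -, hτ23⟩ := up (k+1) M (by omega) (c' ^ z)
    obtain ⟨τg, hτg1, -, -⟩ := up m M (by omega) g
    have hτcfpf : ∀ i, τc i ≠ i := hτc2 hcfpf
    have hτ2fix : ∃ i, τ2 i = i :=
      hτ23 ⟨p0, Equiv.Perm.zpow_apply_eq_self_of_apply_eq_self hfix z⟩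
    have key : ψ M (τg⁻¹ * τc * τg) = ψ M τ2 := by
      rw [map_mul, map_mul, map_inv, hτc1, hτg1, hg, hτ21, map_zpow, ← hx₁, ← hx₂, hz]
    have heq := hinj M key
    obtain ⟨i0, hi0⟩ := hτ2fix
    have h2 : (τg⁻¹ * τc * τg) i0 = i0 := by rw [heq, hi0]
    simp only [Equiv.Perm.mul_apply] at h2
    have h3 : τc (τg i0) = τg i0 := (Equiv.Perm.inv_eq_iff_eq.mp h2).trans rfl
    exact hτcfpf (τg i0) h3
  have hfinset₁ : (F₁ : Set G).Finite := finite_zpowers.mpr hfin₁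
  have hfinset₂ : (F₂ : Set G).Finite := finite_zpowers.mpr hfin₂
  haveI := hcyc₁; haveI := hcyc₂
  refine ⟨⟨F₁, F₂, hfinset₁, hfinset₂, hcyc₁, hcyc₂, hcard,
    ⟨mulEquivOfCyclicCardEq hcard⟩, hncj⟩, ?_⟩
  intro H
  obtain ⟨g, hgθ⟩ := H F₁ F₂ hfinset₁ hfinset₂ (mulEquivOfCyclicCardEq hcard)
  apply hncj g
  ext y
  simp only [Set.mem_image, SetLike.mem_coe]
  constructor
  · rintro ⟨x, hx, rfl⟩
    have h := hgθ ⟨x, hx⟩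
    rw [← h]
    exact ((mulEquivOfCyclicCardEq hcard) ⟨x, hx⟩).2
  · intro hy
    refine ⟨((mulEquivOfCyclicCardEq hcard).symm ⟨y, hy⟩ : F₁),
      ((mulEquivOfCyclicCardEq hcard).symm ⟨y, hy⟩).2, ?_⟩
    have h := hgθ ((mulEquivOfCyclicCardEq hcard).symm ⟨y, hy⟩)
    rw [MulEquiv.apply_symm_apply] at h
    exact h.symm
end

section
/- Let Δ be a countable distance value set with inf Δ = 0, let ε > 0 and m ∈ ℕ⁺. Let (X,d) be a finite Δ-metric space with diameter a, let G be a set of isometries of (X,d), and let D be a (Δ, ε/m)-remetrization of (X^m, d_m), where d_m is the normalized Hamming metric. Equip G^m with the metric δ_D(g,h) = sup_{x∈X^m} D(g^{−1}(x), h^{−1}(x)) and the normalized counting measure. Then the concentration function of (G^m, δ_D) satisfies α_{G^m}(ρ) ≤ 2 exp(−m ρ² / (16 (a + ε)²)). -/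
section Stmt14Aux

open Finset Real

variable {Y : Type} [Fintype Y] [Nonempty Y]

lemma coshStep (h : Y → ℝ) (h0 : ∑ y, h y = 0) (hb : ∀ y, |h y| ≤ 1) (l : ℝ) :
    ∑ y, Real.exp (l * h y) ≤ (Fintype.card Y : ℝ) * Real.exp (l ^ 2 / 2) := by
  have key : ∀ y, Real.exp (l * h y) ≤
      (Real.exp (-l) + Real.exp l) / 2 + h y * ((Real.exp l - Real.exp (-l)) / 2) := by
    intro y
    obtain ⟨hb1, hb2⟩ := abs_le.mp (hb y)
    have h1 : (0:ℝ) ≤ (1 - h y) / 2 := by linarith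
    have h2 : (0:ℝ) ≤ (1 + h y) / 2 := by linarith
    have h3 : (1 - h y) / 2 + (1 + h y) / 2 = 1 := by ring
    have hc := convexOn_exp.2 (Set.mem_univ (-l)) (Set.mem_univ l) h1 h2 h3
    simp only [smul_eq_mul] at hc
    calc Real.exp (l * h y) = Real.exp ((1 - h y) / 2 * (-l) + (1 + h y) / 2 * l) := by
          congr 1; ring
    _ ≤ (1 - h y) / 2 * Real.exp (-l) + (1 + h y) / 2 * Real.exp l := hc
    _ = (Real.exp (-l) + Real.exp l) / 2 + h y * ((Real.exp l - Real.exp (-l)) / 2) := by ring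
  calc ∑ y, Real.exp (l * h y)
      ≤ ∑ y, ((Real.exp (-l) + Real.exp l) / 2 + h y * ((Real.exp l - Real.exp (-l)) / 2)) :=
        Finset.sum_le_sum fun y _ => key y
    _ = (Fintype.card Y : ℝ) * ((Real.exp (-l) + Real.exp l) / 2)
        + (∑ y, h y) * ((Real.exp l - Real.exp (-l)) / 2) := by
        rw [Finset.sum_add_distrib, Finset.sum_const, ← Finset.sum_mul]
        simp [nsmul_eq_mul]
    _ = (Fintype.card Y : ℝ) * Real.cosh l := by rw [h0, Real.cosh_eq]; ring
    _ ≤ (Fintype.card Y : ℝ) * Real.exp (l ^ 2 / 2) := by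
        have : (0:ℝ) ≤ (Fintype.card Y : ℝ) := by positivity
        exact mul_le_mul_of_nonneg_left (Real.cosh_le_exp_half_sq l) this

lemma azuma : ∀ (n : ℕ) (f : (Fin n → Y) → ℝ),
    (∀ w i y, |f (Function.update w i y) - f w| ≤ 1) → ∀ l : ℝ,
    ∑ w, Real.exp (l * f w) ≤ (Fintype.card Y : ℝ) ^ n * Real.exp (n * l ^ 2 / 2) *
      Real.exp (l * ((∑ w, f w) / (Fintype.card Y : ℝ) ^ n)) := by
  intro n
  induction n with
  | zero =>
      intro f _ l
      rw [Fintype.sum_unique (fun w => Real.exp (l * f w)),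
        Fintype.sum_unique f]
      simp
  | succ n ih =>
      intro f hf l
      set K : ℝ := (Fintype.card Y : ℝ) with hK
      have hKpos : 0 < K := by rw [hK]; exact_mod_cast Fintype.card_pos
      have hsum : ∀ g : (Fin (n+1) → Y) → ℝ,
          ∑ w, g w = ∑ w' : Fin n → Y, ∑ y, g (Fin.cons y w') := by
        intro g
        rw [← (Fin.consEquiv (fun _ => Y)).sum_comp g, Fintype.sum_prod_type]
        exact Finset.sum_comm
      set F : (Fin n → Y) → ℝ := fun w' => (∑ y, f (Fin.cons y w')) / K with hF
      have hFlip : ∀ w' i y', |F (Function.update w' i y') - F w'| ≤ 1 := by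
        intro w' i y'
        have : F (Function.update w' i y') - F w'
            = (∑ y, (f (Fin.cons y (Function.update w' i y')) - f (Fin.cons y w'))) / K := by
          rw [Finset.sum_sub_distrib, sub_div, hF]
        rw [this, abs_div, abs_of_pos hKpos, div_le_one hKpos]
        calc |∑ y, (f (Fin.cons y (Function.update w' i y')) - f (Fin.cons y w'))|
            ≤ ∑ y, |f (Fin.cons y (Function.update w' i y')) - f (Fin.cons y w')| :=
              Finset.abs_sum_le_sum_abs _ _
          _ ≤ ∑ _y : Y, (1:ℝ) := Finset.sum_le_sum (fun y _ => by
              rw [Fin.cons_update]; exact hf _ _ _)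
          _ = K := by simp [hK, mul_comm]
      have hb : ∀ w' y, |f (Fin.cons y w') - F w'| ≤ 1 := by
        intro w' y
        have : f (Fin.cons y w') - F w'
            = (∑ y' : Y, (f (Fin.cons y w') - f (Fin.cons y' w'))) / K := by
          rw [Finset.sum_sub_distrib, sub_div, hF, Finset.sum_const]
          congr 1
          simp only [nsmul_eq_mul]
          field_simp
          rw [Finset.card_univ, hK]
        rw [this, abs_div, abs_of_pos hKpos, div_le_one hKpos]
        calc |∑ y' : Y, (f (Fin.cons y w') - f (Fin.cons y' w'))|
            ≤ ∑ y' : Y, |f (Fin.cons y w') - f (Fin.cons y' w')| :=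
              Finset.abs_sum_le_sum_abs _ _
          _ ≤ ∑ _y : Y, (1:ℝ) := Finset.sum_le_sum (fun y' _ => by
              have h1 : (Fin.cons y w' : Fin (n+1) → Y)
                  = Function.update (Fin.cons y' w' : Fin (n+1) → Y) 0 y := by
                rw [Fin.update_cons_zero]
              rw [h1]; exact hf _ _ _)
          _ = K := by simp [hK, mul_comm]
      have h0 : ∀ w', ∑ y, (f (Fin.cons y w') - F w') = 0 := by
        intro w'
        rw [Finset.sum_sub_distrib, Finset.sum_const, hF]
        simp only [nsmul_eq_mul]
        field_simp
        rw [Finset.card_univ, ← hK]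
        ring
      calc ∑ w, Real.exp (l * f w)
          = ∑ w' : Fin n → Y, ∑ y, Real.exp (l * f (Fin.cons y w')) := hsum _
        _ = ∑ w' : Fin n → Y, Real.exp (l * F w') *
              ∑ y, Real.exp (l * (f (Fin.cons y w') - F w')) := by
            refine Finset.sum_congr rfl fun w' _ => ?_
            rw [Finset.mul_sum]
            refine Finset.sum_congr rfl fun y _ => ?_
            rw [← Real.exp_add]
            congr 1; ring
        _ ≤ ∑ w' : Fin n → Y, Real.exp (l * F w') * (K * Real.exp (l ^ 2 / 2)) := by
            refine Finset.sum_le_sum fun w' _ => ?_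
            exact mul_le_mul_of_nonneg_left (coshStep _ (h0 w') (hb w') l)
              (Real.exp_nonneg _)
        _ = K * Real.exp (l ^ 2 / 2) * ∑ w' : Fin n → Y, Real.exp (l * F w') := by
            rw [← Finset.sum_mul]; ring
        _ ≤ K * Real.exp (l ^ 2 / 2) * (K ^ n * Real.exp (n * l ^ 2 / 2) *
              Real.exp (l * ((∑ w', F w') / K ^ n))) := by
            refine mul_le_mul_of_nonneg_left (ih F hFlip l) ?_
            positivity
        _ = K ^ (n+1) * Real.exp (((n+1:ℕ):ℝ) * l ^ 2 / 2) *
              Real.exp (l * ((∑ w, f w) / K ^ (n+1))) := by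
            have hEF : (∑ w', F w') / K ^ n = (∑ w, f w) / K ^ (n+1) := by
              rw [hsum f]
              simp only [hF]
              rw [← Finset.sum_div, div_div, ← pow_succ']
            rw [hEF, pow_succ K n,
              show ((n+1:ℕ):ℝ) * l ^ 2 / 2 = l ^ 2 / 2 + n * l ^ 2 / 2 by push_cast; ring,
              Real.exp_add]
            ring

lemma tailBound (n : ℕ) (hn : 0 < n) (f : (Fin n → Y) → ℝ)
    (hf : ∀ w i y, |f (Function.update w i y) - f w| ≤ 1) (s : ℝ) (hs : 0 ≤ s) :
    ((Finset.univ.filter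
        (fun w : Fin n → Y => (∑ v, f v) / (Fintype.card Y : ℝ) ^ n + s ≤ f w)).card : ℝ)
      ≤ (Fintype.card Y : ℝ) ^ n * Real.exp (-s ^ 2 / (2 * n)) := by
  classical
  set K : ℝ := (Fintype.card Y : ℝ) with hK
  have hKpos : 0 < K := by rw [hK]; exact_mod_cast Fintype.card_pos
  set E : ℝ := (∑ v, f v) / K ^ n with hE
  set l : ℝ := s / n with hl
  have hl0 : 0 ≤ l := by positivity
  set T := Finset.univ.filter (fun w : Fin n → Y => E + s ≤ f w) with hT
  have key : (T.card : ℝ) * Real.exp (l * (E + s)) ≤ K ^ n * Real.exp (n * l ^ 2 / 2)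
      * Real.exp (l * E) := by
    calc (T.card : ℝ) * Real.exp (l * (E + s)) = ∑ _w ∈ T, Real.exp (l * (E + s)) := by
          rw [Finset.sum_const, nsmul_eq_mul]
      _ ≤ ∑ w ∈ T, Real.exp (l * f w) := by
          refine Finset.sum_le_sum fun w hw => ?_
          exact Real.exp_le_exp.mpr
            (mul_le_mul_of_nonneg_left (Finset.mem_filter.mp hw).2 hl0)
      _ ≤ ∑ w, Real.exp (l * f w) :=
          Finset.sum_le_sum_of_subset_of_nonneg (Finset.filter_subset _ _)
            (fun w _ _ => Real.exp_nonneg _)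
      _ ≤ K ^ n * Real.exp (n * l ^ 2 / 2) * Real.exp (l * E) := azuma n f hf l
  have hexp : Real.exp (n * l ^ 2 / 2) * Real.exp (l * E) / Real.exp (l * (E + s))
      = Real.exp (-s ^ 2 / (2 * n)) := by
    rw [← Real.exp_add, ← Real.exp_sub]
    congr 1
    have hn' : (n : ℝ) ≠ 0 := by
      exact_mod_cast hn.ne'
    field_simp [hl]
    have hnl : (n:ℝ) * l = s := by rw [hl]; field_simp
    linear_combination ((n:ℝ) * l - s) * hnl
  have h2 : (T.card : ℝ) ≤ (K ^ n * Real.exp (n * l ^ 2 / 2) * Real.exp (l * E))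
      / Real.exp (l * (E + s)) := by
    rw [le_div_iff₀ (Real.exp_pos _)]
    exact key
  calc (T.card : ℝ) ≤ _ := h2
    _ = K ^ n * Real.exp (-s ^ 2 / (2 * n)) := by
        rw [mul_assoc, mul_div_assoc, hexp]

lemma concBound (n : ℕ) (hn : 0 < n) (f : (Fin n → Y) → ℝ)
    (hf : ∀ w i y, |f (Function.update w i y) - f w| ≤ 1) (hf0 : ∀ w, 0 ≤ f w)
    (S : Finset (Fin n → Y)) (hS0 : ∀ w ∈ S, f w = 0)
    (hhalf : (Fintype.card Y : ℝ) ^ n ≤ 2 * S.card) (r : ℝ) (hr : 0 ≤ r) :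
    ((Finset.univ.filter (fun w : Fin n → Y => r ≤ f w)).card : ℝ)
      ≤ 2 * Real.exp (-r ^ 2 / (16 * n)) * (Fintype.card Y : ℝ) ^ n := by
  classical
  set K : ℝ := (Fintype.card Y : ℝ) with hK
  have hKpos : 0 < K := by rw [hK]; exact_mod_cast Fintype.card_pos
  set E : ℝ := (∑ v, f v) / K ^ n with hE
  have hn' : (0:ℝ) < n := by exact_mod_cast hn
  have hE0 : 0 ≤ E := by
    rw [hE]
    apply div_nonneg (Finset.sum_nonneg fun w _ => hf0 w) (by positivity)
  rcases le_or_gt E (r / 2) with hcase | hcase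
  · -- small mean
    have hsub : Finset.univ.filter (fun w : Fin n → Y => r ≤ f w)
        ⊆ Finset.univ.filter (fun w : Fin n → Y => E + r / 2 ≤ f w) := by
      intro w hw
      rw [Finset.mem_filter] at hw ⊢
      exact ⟨hw.1, by linarith [hw.2]⟩
    have h1 : ((Finset.univ.filter (fun w : Fin n → Y => r ≤ f w)).card : ℝ)
        ≤ K ^ n * Real.exp (-(r/2) ^ 2 / (2 * n)) := by
      calc ((Finset.univ.filter (fun w : Fin n → Y => r ≤ f w)).card : ℝ)
          ≤ ((Finset.univ.filter (fun w : Fin n → Y => E + r / 2 ≤ f w)).card : ℝ) := by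
            exact_mod_cast Finset.card_le_card hsub
        _ ≤ K ^ n * Real.exp (-(r/2) ^ 2 / (2 * n)) :=
            tailBound n hn f hf (r/2) (by linarith)
    calc ((Finset.univ.filter (fun w : Fin n → Y => r ≤ f w)).card : ℝ)
        ≤ K ^ n * Real.exp (-(r/2) ^ 2 / (2 * n)) := h1
      _ ≤ 2 * Real.exp (-r ^ 2 / (16 * n)) * K ^ n := by
          rw [mul_comm (2 * Real.exp (-r ^ 2 / (16 * n))) (K ^ n)]
          have : Real.exp (-(r/2) ^ 2 / (2 * n)) ≤ 2 * Real.exp (-r ^ 2 / (16 * n)) := by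
            calc Real.exp (-(r/2) ^ 2 / (2 * n)) ≤ Real.exp (-r ^ 2 / (16 * n)) := by
                  apply Real.exp_le_exp.mpr
                  rw [div_le_div_iff₀ (by positivity) (by positivity)]
                  nlinarith [sq_nonneg r, hn']
              _ ≤ 2 * Real.exp (-r ^ 2 / (16 * n)) := by nlinarith [Real.exp_pos (-r ^ 2 / (16 * n))]
          exact mul_le_mul_of_nonneg_left this (by positivity)
  · -- large mean: the whole space is small relative to RHS
    have hflip : ∀ w i y, |(fun w => -f w) (Function.update w i y) - (fun w => -f w) w| ≤ 1 := by
      intro w i y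
      simp only
      rw [show -f (Function.update w i y) - -f w = -(f (Function.update w i y) - f w) from by
        ring, abs_neg]
      exact hf w i y
    have hEneg : (∑ v, -f v) / K ^ n = -E := by
      rw [Finset.sum_neg_distrib, hE, neg_div]
    have htb := tailBound n hn (fun w => -f w) hflip E hE0
    have h3 : (S.card : ℝ) ≤ K ^ n * Real.exp (-E ^ 2 / (2 * n)) := by
      refine le_trans (Nat.cast_le.mpr (Finset.card_le_card ?_)) htb
      intro w hw
      simp only [Finset.mem_filter]
      refine ⟨Finset.mem_univ w, ?_⟩
      show (∑ v, -f v) / K ^ n + E ≤ -f w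
      rw [hEneg, hS0 w hw]
      simp
    have h4 : (1 : ℝ) / 2 ≤ Real.exp (-E ^ 2 / (2 * n)) := by
      nlinarith [h3, hhalf, Real.exp_pos (-E ^ 2 / (2 * n)), pow_pos hKpos n]
    have h5 : Real.exp (-E ^ 2 / (2 * n)) ≤ Real.exp (-r ^ 2 / (16 * n)) := by
      apply Real.exp_le_exp.mpr
      rw [div_le_div_iff₀ (by positivity) (by positivity)]
      have hsq : r ^ 2 ≤ 4 * E ^ 2 := by nlinarith [hcase, hr]
      linarith [mul_le_mul_of_nonneg_right hsq hn'.le,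
        mul_nonneg (sq_nonneg r) hn'.le]
    have h6 : K ^ n ≤ 2 * Real.exp (-r ^ 2 / (16 * n)) * K ^ n := by
      nlinarith [pow_pos hKpos n, h4, h5]
    calc ((Finset.univ.filter (fun w : Fin n → Y => r ≤ f w)).card : ℝ)
        ≤ ((Finset.univ : Finset (Fin n → Y)).card : ℝ) := by
          exact_mod_cast Finset.card_le_card (Finset.filter_subset _ _)
      _ = K ^ n := by
          rw [Finset.card_univ, hK]
          norm_cast
          rw [Fintype.card_fun]
          simp
      _ ≤ 2 * Real.exp (-r ^ 2 / (16 * n)) * K ^ n := h6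

lemma hammingConc [DecidableEq Y] (n : ℕ) (hn : 0 < n) (S : Finset (Fin n → Y))
    (hSne : S.Nonempty) (hhalf : (Fintype.card Y : ℝ) ^ n ≤ 2 * S.card) (r : ℝ) (hr : 0 ≤ r) :
    (Fintype.card Y : ℝ) ^ n * (1 - 2 * Real.exp (-r ^ 2 / (16 * n)))
      ≤ ((Finset.univ.filter
          (fun w : Fin n → Y => ∃ v ∈ S, (hammingDist v w : ℝ) < r)).card : ℝ) := by
  classical
  set K : ℝ := (Fintype.card Y : ℝ) with hK
  set f : (Fin n → Y) → ℝ := fun w => S.inf' hSne (fun v => (hammingDist v w : ℝ)) with hfdef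
  have hupd : ∀ (w : Fin n → Y) (i : Fin n) (y : Y),
      (hammingDist (Function.update w i y) w : ℝ) ≤ 1 := by
    intro w i y
    have : hammingDist (Function.update w i y) w ≤ 1 := by
      unfold hammingDist
      calc ({j | Function.update w i y j ≠ w j} : Finset (Fin n)).card
          ≤ ({i} : Finset (Fin n)).card := by
            apply Finset.card_le_card
            intro j hj
            simp only [Finset.mem_filter, Finset.mem_univ, true_and] at hj
            simp only [Finset.mem_singleton]
            by_contra hji
            exact hj (by rw [Function.update_of_ne hji])
        _ = 1 := Finset.card_singleton i
    exact_mod_cast this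
  have hf0 : ∀ w, 0 ≤ f w := by
    intro w
    apply Finset.le_inf'
    intro v _
    positivity
  have hfS : ∀ w ∈ S, f w = 0 := by
    intro w hw
    refine le_antisymm ?_ (hf0 w)
    calc f w ≤ (hammingDist w w : ℝ) := Finset.inf'_le _ hw
      _ = 0 := by rw [hammingDist_self]; norm_num
  have hlip : ∀ w i y, |f (Function.update w i y) - f w| ≤ 1 := by
    intro w i y
    rw [abs_le]
    have key : ∀ u u' : Fin n → Y, (hammingDist u' u : ℝ) ≤ 1 →
        f u ≤ f u' + 1 := by
      intro u u' hd
      obtain ⟨v₀, hv₀S, hv₀⟩ := Finset.exists_mem_eq_inf' hSne (fun v => (hammingDist v u' : ℝ))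
      calc f u ≤ (hammingDist v₀ u : ℝ) := Finset.inf'_le _ hv₀S
        _ ≤ (hammingDist v₀ u' : ℝ) + (hammingDist u' u : ℝ) := by
            exact_mod_cast hammingDist_triangle v₀ u' u
        _ ≤ f u' + 1 := by
            have hfu : f u' = (hammingDist v₀ u' : ℝ) := hv₀
            rw [hfu]
            exact add_le_add le_rfl hd
    constructor
    · have := key w (Function.update w i y) (hupd w i y)
      linarith
    · have := key (Function.update w i y) w (by
        rw [hammingDist_comm]
        exact hupd w i y)
      linarith
  have hcards := Finset.card_filter_add_card_filter_not
    (s := (Finset.univ : Finset (Fin n → Y))) (p := fun w => f w < r)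
  have hcompl : ((Finset.univ.filter (fun w : Fin n → Y => ¬ f w < r)).card : ℝ)
      ≤ 2 * Real.exp (-r ^ 2 / (16 * n)) * K ^ n := by
    have heq : Finset.univ.filter (fun w : Fin n → Y => ¬ f w < r)
        = Finset.univ.filter (fun w : Fin n → Y => r ≤ f w) := by
      apply Finset.filter_congr
      intro w _
      simp [not_lt]
    rw [heq]
    exact concBound n hn f hlip hf0 S hfS hhalf r hr
  have hsame : Finset.univ.filter (fun w : Fin n → Y => ∃ v ∈ S, (hammingDist v w : ℝ) < r)
      = Finset.univ.filter (fun w : Fin n → Y => f w < r) := by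
    apply Finset.filter_congr
    intro w _
    rw [hfdef]
    simp only
    rw [Finset.inf'_lt_iff]
  have huniv : ((Finset.univ : Finset (Fin n → Y)).card : ℝ) = K ^ n := by
    rw [Finset.card_univ, hK]
    norm_cast
    rw [Fintype.card_fun]
    simp
  rw [hsame]
  have : ((Finset.univ.filter (fun w : Fin n → Y => f w < r)).card : ℝ)
      = K ^ n - ((Finset.univ.filter (fun w : Fin n → Y => ¬ f w < r)).card : ℝ) := by
    rw [← huniv, ← hcards]
    push_cast
    ring
  rw [this]
  nlinarith [hcompl]

lemma stmt14_cardSet {α : Type} [Fintype α] {G : Set α} [DecidablePred (· ∈ G)] {m : ℕ}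
    (P : (Fin m → α) → Prop)
    [DecidablePred fun w' : Fin m → {g : α // g ∈ G} => P (fun j => (w' j : α))]
    (hP : ∀ w, P w → ∀ j, w j ∈ G) :
    Nat.card ↥{w : Fin m → α | P w} = (Finset.univ.filter
      (fun w' : Fin m → {g : α // g ∈ G} => P (fun j => (w' j : α)))).card := by
  have e : ↥{w : Fin m → α | P w} ≃
      {w' : Fin m → {g : α // g ∈ G} //
        w' ∈ Finset.univ.filter (fun w' : Fin m → {g : α // g ∈ G} => P (fun j => (w' j : α)))} :=
    { toFun := fun p => ⟨fun j => ⟨p.1 j, hP p.1 p.2 j⟩, by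
        rw [Finset.mem_filter]
        exact ⟨Finset.mem_univ _, p.2⟩⟩
      invFun := fun q => ⟨fun j => (q.1 j : α), (Finset.mem_filter.mp q.2).2⟩
      left_inv := fun p => rfl
      right_inv := fun q => rfl }
  rw [Nat.card_congr e, Nat.card_eq_fintype_card, Fintype.card_coe]

end Stmt14Aux

open Finset Real

/-- the concentration function of `(G^m, δ_D)` with normalized counting
measure satisfies `α(ρ) ≤ 2 exp(−m ρ² / (16 (a + ε)²))`, where `D` is a
`(Δ, ε/m)`-remetrization of the normalized Hamming metric on `X^m` and
`δ_D(g,h) = sup_x D(g⁻¹(x), h⁻¹(x))`. The bound is stated in its equivalent form: every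
subset `A` of `G^m` of measure at least `1/2` has `ρ`-neighborhood of measure at least
`1 − 2 exp(−m ρ² / (16 (a + ε)²))`. -/
theorem stmt_14 (Δ : Set ℝ) (hne : Δ.Nonempty) (hΔcount : Δ.Countable)
    (hΔpos : ∀ x ∈ Δ, 0 < x)
    (hΔclosed : ∀ x ∈ Δ, ∀ y ∈ Δ,
      (BddAbove Δ → min (x + y) (sSup Δ) ∈ Δ) ∧ (¬ BddAbove Δ → x + y ∈ Δ))
    (hΔinf : sInf Δ = 0)
    (ε : ℝ) (hε : 0 < ε) (m : ℕ) (hm : 0 < m)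
    (X : Type) [Fintype X] [Nonempty X]
    -- a finite `Δ`-metric space `(X, d)` of diameter `a`
    (d : X → X → ℝ)
    (hd0 : ∀ x, d x x = 0) (hdsep : ∀ x y, d x y = 0 → x = y)
    (hdsymm : ∀ x y, d x y = d y x) (hdtri : ∀ x y z, d x z ≤ d x y + d y z)
    (hdΔ : ∀ x y, x ≠ y → d x y ∈ Δ)
    (a : ℝ) (hdiam : ∀ x y, d x y ≤ a) (hdiam' : ∃ x y, d x y = a)
    -- `G` is a set of isometries of `(X, d)`
    (G : Set (Equiv.Perm X)) (hG : ∀ g ∈ G, ∀ x y, d (g x) (g y) = d x y)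
    -- `D` is a `(Δ, ε/m)`-remetrization of the normalized Hamming metric on `X^m`
    (D : (Fin m → X) → (Fin m → X) → ℝ)
    (hD0 : ∀ u, D u u = 0) (hDsep : ∀ u v, D u v = 0 → u = v)
    (hDsymm : ∀ u v, D u v = D v u) (hDtri : ∀ u v w, D u w ≤ D u v + D v w)
    (hDΔ : ∀ u v, u ≠ v → D u v ∈ Δ)
    (hDa : ∀ u v, ((1 / (m : ℝ)) * ∑ j, d (u j) (v j)) ∈ Δ →
      D u v = (1 / (m : ℝ)) * ∑ j, d (u j) (v j))
    (hDb : ∀ u v, |D u v - (1 / (m : ℝ)) * ∑ j, d (u j) (v j)| < ε / m)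
    (hDc : ∀ u v u' v',
      (1 / (m : ℝ)) * ∑ j, d (u j) (v j) = (1 / (m : ℝ)) * ∑ j, d (u' j) (v' j) →
      D u v = D u' v')
    (hDd : ∀ φ : (Fin m → X) ≃ (Fin m → X),
      (∀ u v, (1 / (m : ℝ)) * ∑ j, d (φ u j) (φ v j) = (1 / (m : ℝ)) * ∑ j, d (u j) (v j))
      ↔ (∀ u v, D (φ u) (φ v) = D u v)) :
    ∀ ρ : ℝ, 0 < ρ →
      ∀ A : Set (Fin m → Equiv.Perm X),
        A ⊆ {w | ∀ j, w j ∈ G} →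
        (1 : ℝ) / 2 ≤ (Nat.card ↥A : ℝ) / (Nat.card ↥{w : Fin m → Equiv.Perm X | ∀ j, w j ∈ G} : ℝ) →
        1 - 2 * Real.exp (-(m : ℝ) * ρ ^ 2 / (16 * (a + ε) ^ 2)) ≤
          (Nat.card ↥{w : Fin m → Equiv.Perm X | (∀ j, w j ∈ G) ∧ ∃ v ∈ A,
              (⨆ x : Fin m → X, D (fun j => (v j)⁻¹ (x j)) (fun j => (w j)⁻¹ (x j))) < ρ} : ℝ) /
            (Nat.card ↥{w : Fin m → Equiv.Perm X | ∀ j, w j ∈ G} : ℝ) := by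
  intro ρ hρ A hA hhalf
  -- trivial facts
  obtain ⟨x₀⟩ := (inferInstance : Nonempty X)
  have ha0 : 0 ≤ a := (hd0 x₀) ▸ hdiam x₀ x₀
  have haε : 0 < a + ε := by linarith
  have hm' : (0:ℝ) < (m:ℝ) := by exact_mod_cast hm
  -- degenerate case: G^m empty
  rcases Nat.eq_zero_or_pos (Nat.card ↥{w : Fin m → Equiv.Perm X | ∀ j, w j ∈ G}) with h0 | h0
  · rw [h0] at hhalf
    norm_num at hhalf
  -- nonemptiness
  have hGMne : Nonempty ↥{w : Fin m → Equiv.Perm X | ∀ j, w j ∈ G} :=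
    (Nat.card_pos_iff.mp h0).1
  obtain ⟨w₀, hw₀⟩ := hGMne
  have hGne : Nonempty {g : Equiv.Perm X // g ∈ G} := ⟨⟨w₀ ⟨0, hm⟩, hw₀ ⟨0, hm⟩⟩⟩
  letI : DecidableEq X := Classical.decEq X
  letI : DecidablePred (· ∈ G) := Classical.decPred _
  letI : DecidableEq {g : Equiv.Perm X // g ∈ G} := Classical.decEq _
  set Y := {g : Equiv.Perm X // g ∈ G} with hY
  set K : ℝ := (Fintype.card Y : ℝ) with hK
  have hKpos : 0 < K := by rw [hK]; exact_mod_cast Fintype.card_pos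
  letI : DecidablePred fun w' : Fin m → Y => (fun j => (w' j : Equiv.Perm X)) ∈ A :=
    fun _ => Classical.propDecidable _
  letI : DecidablePred fun w' : Fin m → Y =>
      (∀ j, (w' j : Equiv.Perm X) ∈ G) ∧ ∃ v ∈ A,
        (⨆ x : Fin m → X, D (fun j => (v j)⁻¹ (x j))
          (fun j => ((w' j : Equiv.Perm X))⁻¹ (x j))) < ρ :=
    fun _ => Classical.propDecidable _
  -- card of G^m
  have e2 : Nat.card ↥{w : Fin m → Equiv.Perm X | ∀ j, w j ∈ G}
      = (Finset.univ.filter (fun w' : Fin m → Y => ∀ j, (w' j : Equiv.Perm X) ∈ G)).card :=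
    stmt14_cardSet _ (fun w hw => hw)
  have e2' : Nat.card ↥{w : Fin m → Equiv.Perm X | ∀ j, w j ∈ G} = Fintype.card Y ^ m := by
    rw [e2, Finset.filter_true_of_mem (fun w' _ => fun j => (w' j).2), Finset.card_univ,
      Fintype.card_fun, Fintype.card_fin]
  -- card of A
  set S := Finset.univ.filter (fun w' : Fin m → Y => (fun j => (w' j : Equiv.Perm X)) ∈ A)
    with hS
  have e3 : Nat.card ↥A = S.card := by
    have : A = {w : Fin m → Equiv.Perm X | (fun j => w j) ∈ A} := rfl
    rw [this]
    exact stmt14_cardSet _ (fun w hw => hA hw)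
  -- measure hypothesis
  rw [e2', e3] at hhalf
  have hhalfS : K ^ m ≤ 2 * S.card := by
    rw [le_div_iff₀ (by positivity)] at hhalf
    push_cast at hhalf ⊢
    rw [hK]
    push_cast
    linarith
  have hSne : S.Nonempty := by
    rw [← Finset.card_pos]
    rcases Nat.eq_zero_or_pos S.card with h | h
    · rw [h] at hhalfS
      push_cast at hhalfS
      nlinarith [pow_pos hKpos m]
    · exact h
  -- radius in Hamming terms
  set r : ℝ := ρ * m / (a + ε) with hr
  have hr0 : 0 ≤ r := by positivity
  -- bridge: small Hamming distance implies small δ_D distance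
  have bridge : ∀ v' w' : Fin m → Y, (hammingDist v' w' : ℝ) < r →
      (⨆ x : Fin m → X, D (fun j => ((v' j : Equiv.Perm X))⁻¹ (x j))
        (fun j => ((w' j : Equiv.Perm X))⁻¹ (x j))) < ρ := by
    intro v' w' hham
    rcases eq_or_ne v' w' with rfl | hne'
    · simp only [hD0]
      rw [ciSup_const]
      exact hρ
    · set H : ℝ := (hammingDist v' w' : ℝ) with hHd
      have hH1' : (1:ℝ) ≤ H := by
        rw [hHd]
        exact_mod_cast hammingDist_pos.mpr hne'
      have hBρ : (a * H + ε) / m < ρ := by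
        rw [div_lt_iff₀ hm']
        have h1 : H * (a + ε) < ρ * m := by
          have h2 := mul_lt_mul_of_pos_right hham haε
          rwa [hr, div_mul_cancel₀ _ haε.ne'] at h2
        nlinarith [hε, hH1']
      refine lt_of_le_of_lt (ciSup_le fun x => ?_) hBρ
      set u : Fin m → X := fun j => ((v' j : Equiv.Perm X))⁻¹ (x j) with hu
      set u' : Fin m → X := fun j => ((w' j : Equiv.Perm X))⁻¹ (x j) with hu'
      have h1 : D u u' - (1 / (m : ℝ)) * ∑ j, d (u j) (u' j) < ε / m :=
        (abs_sub_lt_iff.mp (hDb u u')).1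
      have h2 : ∑ j, d (u j) (u' j) ≤ a * H := by
        calc ∑ j, d (u j) (u' j) ≤ ∑ j, (if v' j = w' j then 0 else a) := by
              refine Finset.sum_le_sum fun j _ => ?_
              by_cases hj : v' j = w' j
              · rw [if_pos hj]
                have huj : u j = u' j := by
                  rw [hu, hu']
                  simp only
                  rw [hj]
                rw [huj, hd0]
              · rw [if_neg hj]
                exact hdiam _ _
          _ = a * H := by
              rw [Finset.sum_ite, Finset.sum_const_zero, Finset.sum_const, zero_add,
                nsmul_eq_mul, hHd]
              have hfil : (Finset.univ.filter (fun j => ¬ v' j = w' j)).card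
                  = hammingDist v' w' := by
                show _ = (Finset.univ.filter (fun j => v' j ≠ w' j)).card
                congr 1
              rw [hfil]
              ring
      have h3 : (1 / (m : ℝ)) * ∑ j, d (u j) (u' j) ≤ (1 / (m : ℝ)) * (a * H) :=
        mul_le_mul_of_nonneg_left h2 (by positivity)
      have h4 : (a * H + ε) / m = (1 / (m : ℝ)) * (a * H) + ε / m := by
        field_simp
      rw [h4]
      linarith
  -- the Hamming ball is inside the δ_D-neighbourhood
  set ball := Finset.univ.filter
    (fun w' : Fin m → Y => ∃ v' ∈ S, (hammingDist v' w' : ℝ) < r) with hball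
  set T := Finset.univ.filter (fun w' : Fin m → Y =>
    (∀ j, (w' j : Equiv.Perm X) ∈ G) ∧ ∃ v ∈ A,
      (⨆ x : Fin m → X, D (fun j => (v j)⁻¹ (x j))
        (fun j => ((w' j : Equiv.Perm X))⁻¹ (x j))) < ρ) with hT
  have hsub : ball ⊆ T := by
    intro w' hw'
    rw [hball, Finset.mem_filter] at hw'
    obtain ⟨-, v', hv'S, hham⟩ := hw'
    rw [hT, Finset.mem_filter]
    refine ⟨Finset.mem_univ _, fun j => (w' j).2,
      ⟨fun j => (v' j : Equiv.Perm X), ?_, bridge v' w' hham⟩⟩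
    rw [hS] at hv'S
    exact (Finset.mem_filter.mp hv'S).2
  have e1 : Nat.card ↥{w : Fin m → Equiv.Perm X | (∀ j, w j ∈ G) ∧ ∃ v ∈ A,
      (⨆ x : Fin m → X, D (fun j => (v j)⁻¹ (x j)) (fun j => (w j)⁻¹ (x j))) < ρ}
      = T.card := by
    rw [hT]
    exact stmt14_cardSet _ (fun w hw => hw.1)
  have hHC := hammingConc m hm S hSne hhalfS r hr0
  rw [e1, e2']
  have hcards : (0:ℝ) < ((Fintype.card Y ^ m : ℕ) : ℝ) := by
    exact_mod_cast pow_pos Fintype.card_pos m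
  rw [le_div_iff₀ hcards]
  have hexp : -r ^ 2 / (16 * m) = -(m : ℝ) * ρ ^ 2 / (16 * (a + ε) ^ 2) := by
    rw [hr]
    field_simp
  calc (1 - 2 * Real.exp (-(m : ℝ) * ρ ^ 2 / (16 * (a + ε) ^ 2)))
        * ((Fintype.card Y ^ m : ℕ) : ℝ)
      = K ^ m * (1 - 2 * Real.exp (-r ^ 2 / (16 * m))) := by
        rw [hexp, hK]
        push_cast
        ring
    _ ≤ (ball.card : ℝ) := hHC
    _ ≤ (T.card : ℝ) := by exact_mod_cast Finset.card_le_card hsub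
end
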